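/- arXiv:2310.19565 — 8 statements merged into one kernel-verified Lean document; each statement's English description precedes it below -/
import Mathlib

section
/- Let M₁, …, M_k be complex symmetric m×m matrices and define F_i : ℝ^m → ℂ by F_i(x) = xᵀM_ix. Then the family {F₁,…,F_k} satisfies (∇ₓF_i)ᵀ∇ₓF_j = 0 for all x ∈ ℝ^m and all i, j if and only if M_iM_j + M_jM_i = 0 for all i, j (including i = j). -/
/-!
Since `Mᵢ` is symmetric, `(Mᵢx)ᵀ(Mⱼx) = xᵀMᵢMⱼx`, and a scalar equals its transpose, so
`xᵀMᵢMⱼx = xᵀMⱼMᵢx`; hence the pairing of the gradients is `2 xᵀ(MᵢMⱼ + MⱼMᵢ)x`. A symmetric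
complex matrix whose quadratic form vanishes on all real vectors is zero, by polarization with the
vectors `e_p + e_q`.
-/

namespace Matrix

variable {n R : Type*} [Fintype n]

theorem dotProduct_transpose_mulVec_self [CommSemiring R] (A : Matrix n n R) (v : n → R) :
    v ⬝ᵥ Aᵀ *ᵥ v = v ⬝ᵥ A *ᵥ v := by
  rw [← vecMul_transpose, transpose_transpose, dotProduct_comm, ← dotProduct_mulVec]

theorem IsSymm.mulVec_dotProduct_mulVec [CommSemiring R] {A : Matrix n n R} (hA : A.IsSymm)
    (B : Matrix n n R) (v : n → R) : A *ᵥ v ⬝ᵥ B *ᵥ v = v ⬝ᵥ (A * B) *ᵥ v := by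
  rw [← vecMul_transpose, hA.eq, ← dotProduct_mulVec, mulVec_mulVec]

theorem IsSymm.dotProduct_anticommutator_mulVec [CommSemiring R] {A B : Matrix n n R}
    (hA : A.IsSymm) (hB : B.IsSymm) (v : n → R) :
    v ⬝ᵥ (A * B + B * A) *ᵥ v = 2 * (A *ᵥ v ⬝ᵥ B *ᵥ v) := by
  have hBA : B * A = (A * B)ᵀ := by rw [transpose_mul, hA.eq, hB.eq]
  rw [hBA, add_mulVec, dotProduct_add, dotProduct_transpose_mulVec_self,
    hA.mulVec_dotProduct_mulVec, two_mul]

theorem IsSymm.anticommutator [CommSemiring R] {A B : Matrix n n R} (hA : A.IsSymm)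
    (hB : B.IsSymm) : (A * B + B * A).IsSymm := by
  rw [IsSymm, transpose_add, transpose_mul, transpose_mul, hA.eq, hB.eq, add_comm]

theorem single_add_single_dotProduct_mulVec [CommSemiring R] [DecidableEq n] (A : Matrix n n R)
    (p q : n) :
    (Pi.single p 1 + Pi.single q 1) ⬝ᵥ A *ᵥ (Pi.single p 1 + Pi.single q 1) =
      A p p + A q q + (A p q + A q p) := by
  simp only [mulVec_add, dotProduct_add, add_dotProduct, mulVec_single_one, single_one_dotProduct,
    col_apply]
  ring

theorem IsSymm.eq_zero_of_forall_real_dotProduct_mulVec_eq_zero [DecidableEq n]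
    {A : Matrix n n ℂ} (hA : A.IsSymm)
    (h : ∀ x : n → ℝ, (Complex.ofReal ∘ x) ⬝ᵥ A *ᵥ (Complex.ofReal ∘ x) = 0) : A = 0 := by
  have hreal : ∀ p q : n, Complex.ofReal ∘ (Pi.single p 1 + Pi.single q 1 : n → ℝ) =
      Pi.single p 1 + Pi.single q 1 := by
    intro p q; ext r; simp [Pi.single_apply, apply_ite Complex.ofReal]
  have hdiag : ∀ p, A p p = 0 := by
    intro p
    have := h (Pi.single p 1 + Pi.single p 1)
    rw [hreal, single_add_single_dotProduct_mulVec] at this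
    linear_combination this / 4
  ext p q
  have := h (Pi.single p 1 + Pi.single q 1)
  rw [hreal, single_add_single_dotProduct_mulVec, hdiag, hdiag, hA.apply p q] at this
  simpa using this

end Matrix

open Matrix

/-- For `Fᵢ(x) = xᵀMᵢx` with `Mᵢ` complex symmetric, whose gradients are `∇ₓFᵢ = 2Mᵢx`:
the family satisfies `(∇ₓFᵢ)ᵀ∇ₓFⱼ = 0` for all real `x` and all `i, j`
iff `MᵢMⱼ + MⱼMᵢ = 0` for all `i, j`. -/
theorem stmt1 {m k : ℕ} (M : Fin k → Matrix (Fin m) (Fin m) ℂ)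
    (hM : ∀ i, (M i).IsSymm) :
    (∀ (x : Fin m → ℝ) (i j : Fin k),
        ∑ l, (2 * ∑ r, M i l r * (x r : ℂ)) * (2 * ∑ r, M j l r * (x r : ℂ)) = 0)
    ↔ (∀ i j, M i * M j + M j * M i = 0) := by
  have hpairing : ∀ (x : Fin m → ℝ) i j,
      ∑ l, (2 * ∑ r, M i l r * (x r : ℂ)) * (2 * ∑ r, M j l r * (x r : ℂ)) =
        2 * ((Complex.ofReal ∘ x) ⬝ᵥ (M i * M j + M j * M i) *ᵥ (Complex.ofReal ∘ x)) := by
    intro x i j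
    rw [(hM i).dotProduct_anticommutator_mulVec (hM j), ← mul_assoc, dotProduct, Finset.mul_sum]
    exact Finset.sum_congr rfl fun l _ => by
      simp only [mulVec, dotProduct, Function.comp_apply]; ring
  simp only [hpairing, mul_eq_zero, two_ne_zero, false_or]
  refine ⟨fun h i j => ?_, fun h x i j => by rw [h, zero_mulVec, dotProduct_zero]⟩
  exact ((hM i).anticommutator (hM j)).eq_zero_of_forall_real_dotProduct_mulVec_eq_zero
    fun x => h x i j
end

section
/- Let A₁, …, A_k be complex symmetric m×m matrices satisfying A_iA_j + A_jA_i = 0 for all i, j (including i = j), and suppose not all A_i are zero. Then there exists a nonzero vector w ∈ ℂ^m with wᵀw = 0 (w isotropic) such that A_jw = 0 for all j. -/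
/-!
Anticommutation forces `Aᵢ² = 0`, so a product `A_{i₁} ⋯ A_{i_ℓ}` with a repeated index vanishes.
Nonzero products therefore have length at most `k`, and a nonzero product `M` of maximal length
satisfies `Aⱼ M = 0` for all `j`. As the `Aᵢ` are symmetric, `Mᵀ` is the same product in reverse
order, so `Mᵀ M` has a repeated index and vanishes. A nonzero column `w` of `M` then satisfies
`Aⱼ w = 0` and `wᵀ w = (Mᵀ M)_{cc} = 0`.
-/

open Matrix

section AnticommutingProducts

variable {R ι : Type*} [Ring R] [IsAddTorsionFree R] {a : ι → R}

theorem mul_self_eq_zero_of_anticommute (hanti : ∀ i j, a i * a j + a j * a i = 0) (i : ι) :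
    a i * a i = 0 := by
  have h := hanti i i
  rw [← two_nsmul] at h
  exact (nsmul_eq_zero_iff_right two_ne_zero).mp h

theorem mul_prod_map_eq_zero_of_mem (hanti : ∀ i j, a i * a j + a j * a i = 0) {i : ι}
    {l : List ι} (hi : i ∈ l) : a i * (l.map a).prod = 0 := by
  induction l with
  | nil => simp at hi
  | cons j t ih =>
    rw [List.map_cons, List.prod_cons, ← mul_assoc]
    rcases List.mem_cons.mp hi with rfl | hit
    · rw [mul_self_eq_zero_of_anticommute hanti, zero_mul]
    · rw [eq_neg_of_add_eq_zero_left (hanti i j), neg_mul, mul_assoc, ih hit, mul_zero,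
        neg_zero]

theorem prod_map_eq_zero_of_not_nodup (hanti : ∀ i j, a i * a j + a j * a i = 0)
    {l : List ι} (hl : ¬ l.Nodup) : (l.map a).prod = 0 := by
  induction l with
  | nil => simp at hl
  | cons j t ih =>
    rw [List.map_cons, List.prod_cons]
    by_cases hjt : j ∈ t
    · exact mul_prod_map_eq_zero_of_mem hanti hjt
    · rw [ih fun ht => hl (List.nodup_cons.mpr ⟨hjt, ht⟩), mul_zero]

theorem length_le_card_of_prod_map_ne_zero [Fintype ι]
    (hanti : ∀ i j, a i * a j + a j * a i = 0) {l : List ι} (hl : (l.map a).prod ≠ 0) :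
    l.length ≤ Fintype.card ι :=
  (not_not.mp (mt (prod_map_eq_zero_of_not_nodup hanti) hl)).length_le_card

end AnticommutingProducts

theorem List.exists_maximal_of_length_le {α : Type*} {p : List α → Prop} (N : ℕ)
    (hbdd : ∀ l, p l → l.length ≤ N) {l₀ : List α} (h₀ : p l₀) :
    ∃ l, p l ∧ ∀ x, ¬ p (x :: l) := by
  by_contra! hext
  have hlong : ∀ n, ∃ l, p l ∧ n ≤ l.length := by
    intro n
    induction n with
    | zero => exact ⟨l₀, h₀, Nat.zero_le _⟩
    | succ n ih =>
      obtain ⟨l, hl, hn⟩ := ih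
      obtain ⟨x, hx⟩ := hext l hl
      exact ⟨x :: l, hx, by simpa using hn⟩
  obtain ⟨l, hl, hN⟩ := hlong (N + 1)
  exact absurd (hbdd l hl) (by omega)

theorem Matrix.transpose_prod_map_of_isSymm {n R ι : Type*} [Fintype n] [DecidableEq n]
    [CommSemiring R] {A : ι → Matrix n n R} (hsymm : ∀ i, (A i).IsSymm) (l : List ι) :
    (l.map A).prodᵀ = (l.reverse.map A).prod := by
  rw [transpose_list_prod, List.map_map, List.map_reverse]
  congr 3
  exact funext hsymm

theorem Matrix.exists_isotropic_col_of_transpose_mul_self_eq_zero {n p o ι R : Type*}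
    [Fintype n] [CommSemiring R] {M : Matrix n p R} (hM : M ≠ 0) (hMM : Mᵀ * M = 0)
    {A : ι → Matrix o n R} (hAM : ∀ j, A j * M = 0) :
    ∃ w : n → R, w ≠ 0 ∧ (∑ i, w i * w i = 0) ∧ ∀ j, (A j).mulVec w = 0 := by
  obtain ⟨c, hc⟩ := Function.ne_iff.mp (mt transpose_eq_zero.mp hM)
  refine ⟨Mᵀ c, hc, by simpa [mul_apply] using congrFun (congrFun hMM c) c, fun j => ?_⟩
  funext r
  simpa [mulVec, dotProduct, mul_apply] using congrFun (congrFun (hAM j) r) c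

/-- If `A₁,…,A_k` are complex symmetric `m×m` matrices with `AᵢAⱼ + AⱼAᵢ = 0` for all `i, j`
and not all `Aᵢ` are zero, then there is a nonzero isotropic `w ∈ ℂ^m` with `Aⱼw = 0` for all `j`. -/
theorem stmt2 {m k : ℕ} (A : Fin k → Matrix (Fin m) (Fin m) ℂ)
    (hsymm : ∀ i, (A i).IsSymm)
    (hanti : ∀ i j, A i * A j + A j * A i = 0)
    (hne : ∃ i, A i ≠ 0) :
    ∃ w : Fin m → ℂ, w ≠ 0 ∧ (∑ i, w i * w i = 0) ∧ ∀ j, (A j).mulVec w = 0 := by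
  have : IsAddTorsionFree (Matrix (Fin m) (Fin m) ℂ) :=
    inferInstanceAs (IsAddTorsionFree (Fin m → Fin m → ℂ))
  obtain ⟨i₀, hi₀⟩ := hne
  have hsingleton : ([i₀].map A).prod ≠ 0 := by simpa using hi₀
  obtain ⟨l, hl, hmax⟩ := List.exists_maximal_of_length_le k
    (fun l hl => by simpa using length_le_card_of_prod_map_ne_zero hanti hl) hsingleton
  have hl_ne_nil : l ≠ [] := by rintro rfl; exact hi₀ (by simpa using hmax i₀)
  have hMM : (l.map A).prodᵀ * (l.map A).prod = 0 := by
    rw [transpose_prod_map_of_isSymm hsymm, ← List.prod_append, ← List.map_append]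
    refine prod_map_eq_zero_of_not_nodup hanti fun hnd => ?_
    obtain ⟨x, hx⟩ := List.exists_mem_of_ne_nil l hl_ne_nil
    exact List.disjoint_of_nodup_append hnd (List.mem_reverse.mpr hx) hx
  exact exists_isotropic_col_of_transpose_mul_self_eq_zero hl hMM fun j => by
    simpa using hmax j
end

section
/- Let F₁, F₂ : ℝ^{m+1} → ℂ (m ≥ 2) be nonzero harmonic homogeneous polynomials of degree d, and suppose the restrictions f_i = F_i|_{S^m} satisfy g_ℂ(∇^{S^m}f₁, ∇^{S^m}f₂) = μ f₁f₂ on S^m for some μ ∈ ℂ, with f₁f₂ not identically zero. Then μ = −d² and (∇ₓF₁)ᵀ∇ₓF₂ = 0 for all x ∈ ℝ^{m+1}. -/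
/-!
On the unit sphere, Euler's identity `x ⬝ ∇Fᵢ = d Fᵢ` turns the eigenvalue equation into
`∇F₁ ⬝ ∇F₂ = (μ + d²) F₁ F₂`, and homogeneity upgrades this to the polynomial identity
`‖x‖² (∇F₁ ⬝ ∇F₂) = (μ + d²) F₁ F₂`. In at least three variables `‖x‖²` is irreducible, since a
product of two linear forms is a quadratic form of rank at most two. So if `μ + d² ≠ 0`, the prime
`‖x‖²` divides some `Fᵢ`. That is impossible for a nonzero harmonic homogeneous polynomial:
`Δ(‖x‖^(2j+2) H) = ‖x‖^(2j) (c H + ‖x‖² ΔH)` with `c > 0`, so `‖x‖^(2j+2) ∣ Fᵢ` improves to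
`‖x‖^(2j+4) ∣ Fᵢ` for every `j`, which exceeds the degree of `Fᵢ`. Hence `μ = -d²` and
`∇F₁ ⬝ ∇F₂ = 0`.
-/

open MvPolynomial

/-- Evaluation of a complex polynomial at a real point. -/
noncomputable def pev {n : ℕ} (F : MvPolynomial (Fin n) ℂ) (x : Fin n → ℝ) : ℂ :=
  eval (fun j => (x j : ℂ)) F

/-- The (complexified) Euclidean gradient of a polynomial at a real point. -/
noncomputable def pgrad {n : ℕ} (F : MvPolynomial (Fin n) ℂ) (x : Fin n → ℝ) : Fin n → ℂ :=
  fun i => pev (pderiv i F) x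

/-- The spherical gradient of `F|_{S}` at a point of the unit sphere: the tangential
projection of the Euclidean gradient. -/
noncomputable def ptang {n : ℕ} (F : MvPolynomial (Fin n) ℂ) (x : Fin n → ℝ) : Fin n → ℂ :=
  fun i => pgrad F x i - (∑ j, (x j : ℂ) * pgrad F x j) * (x i : ℂ)

namespace MvPolynomial

section Homogeneous

variable {σ R : Type*} [CommSemiring R]

attribute [local instance] gradedAlgebra

lemma homogeneousComponent_add_mul_of_isHomogeneous_left {A : MvPolynomial σ R} {a : ℕ}
    (hA : A.IsHomogeneous a) (i : ℕ) (H : MvPolynomial σ R) :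
    homogeneousComponent (a + i) (A * H) = A * homogeneousComponent i H := by
  rw [← decomposition.decompose'_apply, ← decomposition.decompose'_apply]
  exact DirectSum.coe_decompose_mul_add_of_left_mem (homogeneousSubmodule σ R) hA

lemma homogeneousComponent_mul_of_isHomogeneous_left_of_lt {A : MvPolynomial σ R} {a n : ℕ}
    (hA : A.IsHomogeneous a) (hn : n < a) (H : MvPolynomial σ R) :
    homogeneousComponent n (A * H) = 0 := by
  rw [← decomposition.decompose'_apply]
  exact DirectSum.coe_decompose_mul_of_left_mem_of_not_le (homogeneousSubmodule σ R) hA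
    (not_le.mpr hn)

lemma IsHomogeneous.exists_isHomogeneous_of_eq_mul {F A H : MvPolynomial σ R} {n a : ℕ}
    (hF : F.IsHomogeneous n) (hA : A.IsHomogeneous a) (h : F = A * H) :
    ∃ H', H'.IsHomogeneous (n - a) ∧ F = A * H' := by
  rcases le_or_gt a n with han | han
  · refine ⟨homogeneousComponent (n - a) H, homogeneousComponent_isHomogeneous _ _, ?_⟩
    rw [← homogeneousComponent_add_mul_of_isHomogeneous_left hA, Nat.add_sub_cancel' han, ← h,
      homogeneousComponent_eq_self hF]
  · refine ⟨0, isHomogeneous_zero _ _ _, ?_⟩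
    rw [mul_zero, ← homogeneousComponent_eq_self hF, h,
      homogeneousComponent_mul_of_isHomogeneous_left_of_lt hA han]

lemma IsHomogeneous.eval_smul {φ : MvPolynomial σ R} {n : ℕ} [Fintype σ]
    (hφ : φ.IsHomogeneous n) (t : R) (z : σ → R) :
    eval (t • z) φ = t ^ n * eval z φ := by
  classical
  simp only [eval_eq', Finset.mul_sum, Pi.smul_apply, smul_eq_mul, mul_pow,
    Finset.prod_mul_distrib, Finset.prod_pow_eq_pow_sum]
  refine Finset.sum_congr rfl fun s hs => ?_
  have hdeg : ∑ i, s i = n := by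
    rw [← Finsupp.degree_eq_sum, Finsupp.degree_eq_weight_one]
    exact hφ (mem_support_iff.mp hs)
  rw [hdeg]
  ring

lemma pderiv_eq_zero_of_isHomogeneous_zero {F : MvPolynomial σ R} (hF : F.IsHomogeneous 0)
    (i : σ) : pderiv i F = 0 := by
  rw [← totalDegree_zero_iff_isHomogeneous, totalDegree_eq_zero_iff_eq_C] at hF
  rw [hF, pderiv_C]

end Homogeneous

section Laplacian

variable {σ R : Type*} [Fintype σ] [CommSemiring R]

noncomputable def sumXSq : MvPolynomial σ R := ∑ i, X i ^ 2

noncomputable def laplacian (φ : MvPolynomial σ R) : MvPolynomial σ R :=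
  ∑ i, pderiv i (pderiv i φ)

noncomputable def gradDot (φ ψ : MvPolynomial σ R) : MvPolynomial σ R :=
  ∑ i, pderiv i φ * pderiv i ψ

lemma isHomogeneous_sumXSq : (sumXSq : MvPolynomial σ R).IsHomogeneous 2 :=
  IsHomogeneous.sum _ _ _ fun i _ => isHomogeneous_X_pow i 2

lemma sumXSq_ne_zero [Nonempty σ] [Nontrivial R] : (sumXSq : MvPolynomial σ R) ≠ 0 := by
  classical
  intro h
  have := congrArg (coeff (Finsupp.single (Classical.arbitrary σ) 2)) h
  simp [sumXSq, coeff_sum, coeff_X_pow, Finsupp.single_left_inj] at this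

lemma pderiv_sumXSq (i : σ) : pderiv i (sumXSq : MvPolynomial σ R) = 2 * X i := by
  classical
  rw [sumXSq, map_sum, Finset.sum_eq_single i (fun j _ hj => by simp [pderiv_X_of_ne hj])
    (by simp)]
  simp [mul_comm]

lemma pderiv_sumXSq_pow (j : ℕ) (i : σ) :
    pderiv i ((sumXSq : MvPolynomial σ R) ^ (j + 1))
      = ((2 * (j + 1) : ℕ) : MvPolynomial σ R) * sumXSq ^ j * X i := by
  rw [pderiv_pow, pderiv_sumXSq]
  push_cast
  ring

lemma laplacian_mul (φ ψ : MvPolynomial σ R) :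
    laplacian (φ * ψ) = laplacian φ * ψ + 2 * gradDot φ ψ + φ * laplacian ψ := by
  simp only [laplacian, gradDot, Derivation.leibniz, map_add, smul_eq_mul, Finset.sum_add_distrib,
    ← Finset.mul_sum]
  rw [Finset.sum_congr rfl fun i _ => mul_comm (pderiv i ψ) (pderiv i φ)]
  ring

lemma laplacian_sumXSq_pow (j : ℕ) :
    laplacian ((sumXSq : MvPolynomial σ R) ^ (j + 1))
      = ((2 * (j + 1) * (2 * j + Fintype.card σ) : ℕ) : MvPolynomial σ R) * sumXSq ^ j := by
  have hE := (isHomogeneous_sumXSq (σ := σ) (R := R)).pow j |>.sum_X_mul_pderiv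
  have hterm : ∀ i : σ, pderiv i (pderiv i ((sumXSq : MvPolynomial σ R) ^ (j + 1)))
      = ((2 * (j + 1) : ℕ) : MvPolynomial σ R) * (X i * pderiv i (sumXSq ^ j) + sumXSq ^ j) := by
    intro i
    simp only [pderiv_sumXSq_pow, Derivation.leibniz, pderiv_X_self, Derivation.map_natCast,
      smul_eq_mul]
    ring
  rw [laplacian, Finset.sum_congr rfl fun i _ => hterm i, ← Finset.mul_sum,
    Finset.sum_add_distrib, hE, Finset.sum_const, Finset.card_univ, nsmul_eq_mul, nsmul_eq_mul]
  push_cast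
  ring

lemma gradDot_sumXSq_pow_left (j : ℕ) {H : MvPolynomial σ R} {e : ℕ} (hH : H.IsHomogeneous e) :
    gradDot ((sumXSq : MvPolynomial σ R) ^ (j + 1)) H
      = ((2 * (j + 1) * e : ℕ) : MvPolynomial σ R) * sumXSq ^ j * H := by
  have hE := hH.sum_X_mul_pderiv
  have hterm : ∀ i : σ, pderiv i ((sumXSq : MvPolynomial σ R) ^ (j + 1)) * pderiv i H
      = ((2 * (j + 1) : ℕ) : MvPolynomial σ R) * sumXSq ^ j * (X i * pderiv i H) := by
    intro i
    rw [pderiv_sumXSq_pow]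
    ring
  rw [gradDot, Finset.sum_congr rfl fun i _ => hterm i, ← Finset.mul_sum, hE, nsmul_eq_mul]
  push_cast
  ring

lemma laplacian_sumXSq_pow_mul (j : ℕ) {H : MvPolynomial σ R} {e : ℕ} (hH : H.IsHomogeneous e) :
    laplacian ((sumXSq : MvPolynomial σ R) ^ (j + 1) * H)
      = sumXSq ^ j * (((2 * (j + 1) * (2 * j + Fintype.card σ + 2 * e) : ℕ) : MvPolynomial σ R) * H
          + sumXSq * laplacian H) := by
  rw [laplacian_mul, laplacian_sumXSq_pow, gradDot_sumXSq_pow_left j hH]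
  push_cast
  ring

lemma isHomogeneous_sumXSq_mul_gradDot {F G : MvPolynomial σ R} {d e : ℕ}
    (hF : F.IsHomogeneous d) (hG : G.IsHomogeneous e) :
    (sumXSq * gradDot F G).IsHomogeneous (d + e) := by
  rcases d with _ | d
  · simp [gradDot, pderiv_eq_zero_of_isHomogeneous_zero hF, isHomogeneous_zero]
  rcases e with _ | e
  · simp [gradDot, pderiv_eq_zero_of_isHomogeneous_zero hG, isHomogeneous_zero]
  have h : (sumXSq * gradDot F G).IsHomogeneous (2 + (d + e)) :=
    isHomogeneous_sumXSq.mul <| IsHomogeneous.sum _ _ _ fun i _ => by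
      simpa using hF.pderiv (i := i) |>.mul (hG.pderiv (i := i))
  convert h using 1
  omega

end Laplacian

section Harmonic

variable {σ K : Type*} [Fintype σ] [Nonempty σ] [Field K] [CharZero K]

lemma sumXSq_pow_dvd_of_laplacian_eq_zero {F : MvPolynomial σ K} {k : ℕ}
    (hF : F.IsHomogeneous k) (hΔ : laplacian F = 0) (hdvd : sumXSq ∣ F) (j : ℕ) :
    sumXSq ^ (j + 1) ∣ F := by
  induction j with
  | zero => simpa using hdvd
  | succ j ih =>
    obtain ⟨H₀, hH₀⟩ := ih
    obtain ⟨H, hH, rfl⟩ := hF.exists_isHomogeneous_of_eq_mul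
      (isHomogeneous_sumXSq.pow (j + 1)) hH₀
    set c : ℕ := 2 * (j + 1) * (2 * j + Fintype.card σ + 2 * (k - 2 * (j + 1)))
    have hc : IsUnit (c : MvPolynomial σ K) := by
      rw [← map_natCast C]
      exact (isUnit_iff_ne_zero.mpr (Nat.cast_ne_zero.mpr (by positivity))).map C
    rw [laplacian_sumXSq_pow_mul j hH] at hΔ
    have hcH : (c : MvPolynomial σ K) * H = -(sumXSq * laplacian H) :=
      eq_neg_of_add_eq_zero_left <|
        (mul_eq_zero.mp hΔ).resolve_left (pow_ne_zero _ sumXSq_ne_zero)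
    obtain ⟨Z, rfl⟩ : sumXSq ∣ H := hc.dvd_mul_left.mp ⟨-laplacian H, by rw [hcH, mul_neg]⟩
    exact ⟨Z, by ring⟩

lemma eq_zero_of_laplacian_eq_zero_of_sumXSq_dvd {F : MvPolynomial σ K} {k : ℕ}
    (hF : F.IsHomogeneous k) (hΔ : laplacian F = 0) (hdvd : sumXSq ∣ F) : F = 0 := by
  obtain ⟨H, rfl⟩ := sumXSq_pow_dvd_of_laplacian_eq_zero hF hΔ hdvd k
  rw [← homogeneousComponent_eq_self hF,
    homogeneousComponent_mul_of_isHomogeneous_left_of_lt (isHomogeneous_sumXSq.pow (k + 1))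
      (by omega)]

end Harmonic

section Linear

variable {σ R : Type*} [CommSemiring R]

lemma isHomogeneous_one_of_totalDegree_le_one {f : MvPolynomial σ R} (h1 : f.totalDegree ≤ 1)
    (h0 : constantCoeff f = 0) : f.IsHomogeneous 1 := by
  intro d hd
  have hd0 : d ≠ 0 := by
    rintro rfl
    exact hd (by rwa [← constantCoeff_eq])
  have hle : d.degree ≤ 1 := (le_totalDegree (mem_support_iff.mpr hd)).trans h1
  have hdeg : d.degree = 1 := by
    have : d.degree ≠ 0 := by rwa [Ne, Finsupp.degree_eq_zero_iff]
    omega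
  rwa [Finsupp.degree_eq_weight_one] at hdeg

lemma IsHomogeneous.exists_eq_sum_smul_X [Fintype σ] {f : MvPolynomial σ R}
    (hf : f.IsHomogeneous 1) : ∃ a : σ → R, f = ∑ i, a i • X i := by
  have hmem : f ∈ Submodule.span R (Set.range X) := by
    rw [← homogeneousSubmodule_one_eq_span_X]
    exact hf
  obtain ⟨a, ha⟩ := (Submodule.mem_span_range_iff_exists_fun R).mp hmem
  exact ⟨a, ha.symm⟩

end Linear

section Irreducible

variable {σ K : Type*} [Fintype σ] [Field K] [NeZero (2 : K)]

lemma not_forall_sum_sq_eq_mul (hσ : 2 < Fintype.card σ) (a b : σ → K) :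
    ¬ ∀ z : σ → K, ∑ i, z i ^ 2 = (∑ i, a i * z i) * (∑ i, b i * z i) := by
  classical
  intro h
  have hdiag : ∀ i, a i * b i = 1 := fun i => by
    simpa [Pi.single_apply] using (h (Pi.single i 1)).symm
  have hoff : ∀ i j, i ≠ j → a i * b j + a j * b i = 0 := fun i j hij => by
    have := h (Pi.single i 1 + Pi.single j 1)
    simp [Pi.single_apply, add_sq, mul_add, Finset.sum_add_distrib, hij.symm] at this
    linear_combination -this - hdiag i - hdiag j
  have hsq : ∀ i j, i ≠ j → a i ^ 2 + a j ^ 2 = 0 := fun i j hij => by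
    linear_combination (a i * a j) * hoff i j hij - a i ^ 2 * hdiag j - a j ^ 2 * hdiag i
  obtain ⟨i, j, k, hij, hik, hjk⟩ := Fintype.two_lt_card_iff.mp hσ
  have hai : a i = 0 := by
    have : (2 : K) * a i ^ 2 = 0 := by
      linear_combination hsq i j hij + hsq i k hik - hsq j k hjk
    simpa [two_ne_zero] using this
  simpa [hai] using hdiag i

theorem irreducible_sumXSq (hσ : 2 < Fintype.card σ) :
    Irreducible (sumXSq : MvPolynomial σ K) := by
  have : Nonempty σ := Fintype.card_pos_iff.mp (by omega)
  have key : ∀ f g : MvPolynomial σ K,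
      f * g = sumXSq → ¬IsUnit g → constantCoeff f = 0 → False := by
    intro f g hfg hg hf0
    have hfne : f ≠ 0 := by rintro rfl; exact sumXSq_ne_zero (by simpa using hfg.symm)
    have hgne : g ≠ 0 := by rintro rfl; exact sumXSq_ne_zero (by simpa using hfg.symm)
    have hdeg : f.totalDegree + g.totalDegree = 2 := by
      rw [← totalDegree_mul_of_isDomain hfne hgne, hfg,
        isHomogeneous_sumXSq.totalDegree sumXSq_ne_zero]
    have hg1 : g.totalDegree ≠ 0 := fun h => hg <| isUnit_iff_totalDegree_of_isReduced.mpr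
      ⟨isUnit_iff_ne_zero.mpr fun h0 => hgne <| by rw [totalDegree_eq_zero_iff_eq_C.mp h, h0, C_0],
        h⟩
    have hf1 : f.IsHomogeneous 1 := isHomogeneous_one_of_totalDegree_le_one (by omega) hf0
    obtain ⟨g', hg', hfg'⟩ := isHomogeneous_sumXSq.exists_isHomogeneous_of_eq_mul hf1 hfg.symm
    obtain rfl : g = g' := mul_left_cancel₀ hfne (hfg.trans hfg')
    obtain ⟨a, rfl⟩ := hf1.exists_eq_sum_smul_X
    obtain ⟨b, rfl⟩ := hg'.exists_eq_sum_smul_X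
    refine not_forall_sum_sq_eq_mul hσ a b fun z => ?_
    simpa [sumXSq, smul_eval] using congrArg (eval z) hfg.symm
  refine ⟨fun hu => by simpa [sumXSq] using hu.map constantCoeff, fun f g hfg => ?_⟩
  by_contra! hfg'
  have hcc : constantCoeff f * constantCoeff g = 0 := by
    rw [← map_mul, ← hfg]
    simp [sumXSq]
  rcases mul_eq_zero.mp hcc with h | h
  · exact key f g hfg.symm hfg'.2 h
  · exact key g f (by rw [mul_comm, hfg]) hfg'.1 h

end Irreducible

section Real

variable {σ : Type*}

lemma eq_zero_of_forall_eval_ofReal {G : MvPolynomial σ ℂ}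
    (h : ∀ x : σ → ℝ, eval (fun j => (x j : ℂ)) G = 0) : G = 0 := by
  refine funext_set (fun _ => Set.range ((↑) : ℝ → ℂ))
    (fun _ => Set.infinite_range_of_injective Complex.ofReal_injective) fun z hz => ?_
  choose x hx using fun j => hz j trivial
  simpa [← _root_.funext hx] using h x

lemma exists_sum_sq_eq_one_and_eq_smul [Fintype σ] [Nonempty σ] (y : σ → ℝ) :
    ∃ (t : ℝ) (v : σ → ℝ), ∑ j, v j ^ 2 = 1 ∧ y = t • v := by
  classical
  by_cases hy : y = 0
  · exact ⟨0, Pi.single (Classical.arbitrary σ) 1, by simp [Pi.single_apply], by simp [hy]⟩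
  have hpos : 0 < ∑ j, y j ^ 2 := by
    obtain ⟨j, hj⟩ := Function.ne_iff.mp hy
    exact Finset.sum_pos' (fun j _ => sq_nonneg (y j))
      ⟨j, Finset.mem_univ _, sq_pos_of_ne_zero hj⟩
  set t := √(∑ j, y j ^ 2)
  have ht : t ≠ 0 := (Real.sqrt_pos.mpr hpos).ne'
  refine ⟨t, t⁻¹ • y, ?_, (smul_inv_smul₀ ht y).symm⟩
  simp only [Pi.smul_apply, smul_eq_mul, mul_pow, ← Finset.mul_sum, inv_pow,
    Real.sq_sqrt hpos.le, t]
  exact inv_mul_cancel₀ hpos.ne'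

lemma IsHomogeneous.eq_zero_of_forall_sum_sq_eq_one [Fintype σ] [Nonempty σ]
    {G : MvPolynomial σ ℂ} {n : ℕ} (hG : G.IsHomogeneous n)
    (h : ∀ x : σ → ℝ, ∑ j, x j ^ 2 = 1 → eval (fun j => (x j : ℂ)) G = 0) : G = 0 := by
  refine eq_zero_of_forall_eval_ofReal fun y => ?_
  obtain ⟨t, v, hv, rfl⟩ := exists_sum_sq_eq_one_and_eq_smul y
  have hsmul : (fun j => ((t • v) j : ℂ)) = (t : ℂ) • fun j => (v j : ℂ) := by
    ext j
    simp
  rw [hsmul, hG.eval_smul, h v hv, mul_zero]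

end Real

end MvPolynomial

lemma pev_gradDot {n : ℕ} (F G : MvPolynomial (Fin n) ℂ) (x : Fin n → ℝ) :
    pev (gradDot F G) x = ∑ i, pgrad F x i * pgrad G x i := by
  simp [gradDot, pev, pgrad]

lemma sum_mul_pgrad_of_isHomogeneous {n d : ℕ} {F : MvPolynomial (Fin n) ℂ}
    (hF : F.IsHomogeneous d) (x : Fin n → ℝ) :
    ∑ j, (x j : ℂ) * pgrad F x j = d * pev F x := by
  simpa [pev, pgrad] using congrArg (eval fun j => (x j : ℂ)) hF.sum_X_mul_pderiv

lemma sum_ptang_mul_ptang {n : ℕ} (F G : MvPolynomial (Fin n) ℂ) {x : Fin n → ℝ}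
    (hx : ∑ j, x j ^ 2 = 1) :
    ∑ i, ptang F x i * ptang G x i = ∑ i, pgrad F x i * pgrad G x i
      - (∑ j, (x j : ℂ) * pgrad F x j) * (∑ j, (x j : ℂ) * pgrad G x j) := by
  have hx' : ∑ j, (x j : ℂ) ^ 2 = 1 := by exact_mod_cast hx
  set S := ∑ j, (x j : ℂ) * pgrad F x j
  set T := ∑ j, (x j : ℂ) * pgrad G x j
  calc ∑ i, ptang F x i * ptang G x i
      = ∑ i, (pgrad F x i * pgrad G x i - T * ((x i : ℂ) * pgrad F x i)
          - S * ((x i : ℂ) * pgrad G x i) + S * T * (x i : ℂ) ^ 2) :=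
        Finset.sum_congr rfl fun i _ => by simp only [ptang]; ring
    _ = ∑ i, pgrad F x i * pgrad G x i - T * S - S * T + S * T * 1 := by
        simp only [Finset.sum_add_distrib, Finset.sum_sub_distrib, ← Finset.mul_sum, hx', S, T]
    _ = ∑ i, pgrad F x i * pgrad G x i - S * T := by ring

lemma sumXSq_mul_gradDot_eq {n d₁ d₂ : ℕ} [NeZero n] {F₁ F₂ : MvPolynomial (Fin n) ℂ}
    (hhom₁ : F₁.IsHomogeneous d₁) (hhom₂ : F₂.IsHomogeneous d₂) {μ : ℂ}
    (heig : ∀ x : Fin n → ℝ, ∑ j, x j ^ 2 = 1 →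
      ∑ i, ptang F₁ x i * ptang F₂ x i = μ * pev F₁ x * pev F₂ x) :
    sumXSq * gradDot F₁ F₂ = C (μ + d₁ * d₂) * (F₁ * F₂) := by
  refine sub_eq_zero.mp <| ((isHomogeneous_sumXSq_mul_gradDot hhom₁ hhom₂).sub
    ((hhom₁.mul hhom₂).C_mul _)).eq_zero_of_forall_sum_sq_eq_one fun x hx => ?_
  have h := heig x hx
  rw [sum_ptang_mul_ptang F₁ F₂ hx, sum_mul_pgrad_of_isHomogeneous hhom₁,
    sum_mul_pgrad_of_isHomogeneous hhom₂, ← pev_gradDot] at h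
  have hr : pev (sumXSq : MvPolynomial (Fin n) ℂ) x = 1 := by
    simpa [pev, sumXSq] using congrArg ((↑) : ℝ → ℂ) hx
  simp only [pev, map_sub, map_mul, eval_C] at h hr ⊢
  rw [hr]
  linear_combination h

theorem stmt8_general {m : ℕ} (hm : 2 ≤ m) (d : ℕ) (F₁ F₂ : MvPolynomial (Fin (m + 1)) ℂ)
    (hne₁ : F₁ ≠ 0) (hne₂ : F₂ ≠ 0)
    (hhom₁ : F₁.IsHomogeneous d) (hhom₂ : F₂.IsHomogeneous d)
    (hharm₁ : ∑ i : Fin (m + 1), pderiv i (pderiv i F₁) = 0)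
    (hharm₂ : ∑ i : Fin (m + 1), pderiv i (pderiv i F₂) = 0)
    (μ : ℂ)
    (heig : ∀ x : Fin (m + 1) → ℝ, ∑ j, x j ^ 2 = 1 →
      ∑ i, ptang F₁ x i * ptang F₂ x i = μ * pev F₁ x * pev F₂ x) :
    μ = -(d : ℂ) ^ 2 ∧ ∀ x : Fin (m + 1) → ℝ, ∑ i, pgrad F₁ x i * pgrad F₂ x i = 0 := by
  have hkey := sumXSq_mul_gradDot_eq hhom₁ hhom₂ heig
  have hc : μ + d * d = 0 := by
    by_contra hc
    have hprime : Prime (sumXSq : MvPolynomial (Fin (m + 1)) ℂ) :=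
      UniqueFactorizationMonoid.irreducible_iff_prime.mp (irreducible_sumXSq (by simp; omega))
    have hdvd : sumXSq ∣ F₁ * F₂ :=
      ((isUnit_iff_ne_zero.mpr hc).map C).dvd_mul_left.mp ⟨_, hkey.symm⟩
    rcases hprime.dvd_or_dvd hdvd with h | h
    · exact hne₁ (eq_zero_of_laplacian_eq_zero_of_sumXSq_dvd hhom₁ hharm₁ h)
    · exact hne₂ (eq_zero_of_laplacian_eq_zero_of_sumXSq_dvd hhom₂ hharm₂ h)
  have hgrad : gradDot F₁ F₂ = 0 := by
    rw [hc, C_0, zero_mul] at hkey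
    exact (mul_eq_zero.mp hkey).resolve_left sumXSq_ne_zero
  exact ⟨by linear_combination hc, fun x => by rw [← pev_gradDot, hgrad, pev, map_zero]⟩

/-- If `F₁, F₂` are nonzero harmonic homogeneous polynomials of degree `d` on `ℝ^{m+1}`, `m ≥ 2`,
whose restrictions `fᵢ = Fᵢ|_{S^m}` satisfy `g_ℂ(∇^{S^m}f₁, ∇^{S^m}f₂) = μ f₁f₂` with `f₁f₂` not
identically zero on the sphere, then `μ = -d²` and `(∇ₓF₁)ᵀ∇ₓF₂ = 0` everywhere. -/
theorem stmt8 {m : ℕ} (hm : 2 ≤ m) (d : ℕ) (F₁ F₂ : MvPolynomial (Fin (m + 1)) ℂ)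
    (hne₁ : F₁ ≠ 0) (hne₂ : F₂ ≠ 0)
    (hhom₁ : F₁.IsHomogeneous d) (hhom₂ : F₂.IsHomogeneous d)
    (hharm₁ : ∑ i : Fin (m + 1), pderiv i (pderiv i F₁) = 0)
    (hharm₂ : ∑ i : Fin (m + 1), pderiv i (pderiv i F₂) = 0)
    (μ : ℂ)
    (heig : ∀ x : Fin (m + 1) → ℝ, ∑ j, x j ^ 2 = 1 →
      ∑ i, ptang F₁ x i * ptang F₂ x i = μ * pev F₁ x * pev F₂ x)
    (hnz : ∃ x : Fin (m + 1) → ℝ, ∑ j, x j ^ 2 = 1 ∧ pev F₁ x * pev F₂ x ≠ 0) :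
    μ = -(d : ℂ) ^ 2 ∧ ∀ x : Fin (m + 1) → ℝ, ∑ i, pgrad F₁ x i * pgrad F₂ x i = 0 :=
  stmt8_general hm d F₁ F₂ hne₁ hne₂ hhom₁ hhom₂ hharm₁ hharm₂ μ heig
end

section
/- Let 𝓕 be a family of smooth functions from ℝ^m to ℂ such that the span of all gradients {∇ₓF : x ∈ ℝ^m, F ∈ 𝓕} is an isotropic subspace of ℂ^m (i.e. (∇ₓF)ᵀ∇ᵧG = 0 for all F, G ∈ 𝓕 and x, y ∈ ℝ^m). Then there exist k ≥ 0, an ℝ-linear isometric embedding a : ℂ^k → ℝ^m with adjoint π = a*, such that every F ∈ 𝓕 satisfies F = (F∘a)∘π and F∘a : ℂ^k → ℂ is holomorphic. -/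
noncomputable def grad {n : ℕ} (F : (Fin n → ℝ) → ℂ) (x : Fin n → ℝ) : Fin n → ℂ :=
  fun i => fderiv ℝ F x (Pi.single i 1)

lemma fderiv_apply_eq_sum_grad {m : ℕ} (F : (Fin m → ℝ) → ℂ) (y d : Fin m → ℝ) :
    fderiv ℝ F y d = ∑ i, (d i : ℂ) * grad F y i := by
  conv_lhs => rw [pi_eq_sum_univ d]
  rw [map_sum]
  refine Finset.sum_congr rfl fun i _ => ?_
  rw [ContinuousLinearMap.map_smul]
  have : (fun j => if i = j then (1:ℝ) else 0) = Pi.single i 1 := by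
    funext j; simp [Pi.single_apply, eq_comm]
  rw [this, Complex.real_smul]; rfl

lemma const_along {m : ℕ} {F : (Fin m → ℝ) → ℂ} (hF : Differentiable ℝ F)
    (x d : Fin m → ℝ) (h : ∀ y, fderiv ℝ F y d = 0) : F (x + d) = F x := by
  have key : ∀ t : ℝ, HasDerivAt (fun t : ℝ => F (x + t • d)) 0 t := by
    intro t
    have h1 : HasDerivAt (fun t : ℝ => x + t • d) d t := by
      simpa using ((hasDerivAt_id t).smul_const d).const_add x
    have h2 := (hF (x + t • d)).hasFDerivAt.comp_hasDerivAt t h1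
    exact (by simpa [h] using h2 : HasDerivAt (F ∘ fun t : ℝ => x + t • d) 0 t)
  have := is_const_of_deriv_eq_zero (f := fun t : ℝ => F (x + t • d))
    (fun t => (key t).differentiableAt) (fun t => (key t).deriv) 1 0
  simpa using this

lemma re_mul_re {c2 : ℝ} (hc2sq : c2 * c2 = 2) (z w : ℂ) :
    (c2 * z.re) * (c2 * w.re) = (z * w).re + (z * (starRingEnd ℂ) w).re := by
  simp only [Complex.mul_re, Complex.conj_re, Complex.conj_im]
  linear_combination (z.re * w.re) * hc2sq

/-- If the gradients of a family `𝓕` of smooth functions `ℝ^m → ℂ` span an isotropic subspace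
of `ℂ^m`, then there exist `k ≥ 0`, an ℝ-linear isometric embedding `a : ℂ^k → ℝ^m` with adjoint
`π = a*`, such that every `F ∈ 𝓕` satisfies `F = (F∘a)∘π` and `F∘a` is holomorphic. -/
theorem stmt10 {m : ℕ} (𝓕 : Set ((Fin m → ℝ) → ℂ))
    (hsmooth : ∀ F ∈ 𝓕, ContDiff ℝ (⊤ : ℕ∞) F)
    (hiso : ∀ F ∈ 𝓕, ∀ G ∈ 𝓕, ∀ x y : Fin m → ℝ,
      ∑ i, grad F x i * grad G y i = 0) :
    ∃ (k : ℕ) (a : (Fin k → ℂ) →ₗ[ℝ] (Fin m → ℝ)) (π : (Fin m → ℝ) →ₗ[ℝ] (Fin k → ℂ)),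
      (∀ v w : Fin k → ℂ, ∑ i, a v i * a w i = (∑ i, (starRingEnd ℂ) (v i) * w i).re) ∧
      (∀ (x : Fin m → ℝ) (v : Fin k → ℂ),
        (∑ i, (starRingEnd ℂ) (π x i) * v i).re = ∑ i, x i * a v i) ∧
      ∀ F ∈ 𝓕, (∀ x, F (a (π x)) = F x) ∧
        ∀ z v : Fin k → ℂ, fderiv ℝ (fun u => F (a u)) z (fun i => Complex.I * v i)
          = Complex.I * fderiv ℝ (fun u => F (a u)) z v := by
  classical
  set E := EuclideanSpace ℂ (Fin m) with hE
  set S : Set E := {g | ∃ F ∈ 𝓕, ∃ x : Fin m → ℝ, g = grad F x} with hS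
  set Z := Submodule.span ℂ S with hZ
  have Eadd : ∀ (u v : E) (i : Fin m), (u + v) i = u i + v i := fun _ _ _ => rfl
  have Esmul : ∀ (c : ℂ) (u : E) (i : Fin m), (c • u) i = c * u i := fun _ _ _ => rfl
  have Ezero : ∀ i : Fin m, (0 : E) i = 0 := fun _ => rfl
  -- isotropy on Z
  have hBZ : ∀ z ∈ Z, ∀ w ∈ Z, ∑ i, z i * w i = 0 := by
    intro z hz
    induction hz using Submodule.span_induction with
    | mem z hzS =>
      intro w hw
      induction hw using Submodule.span_induction with
      | mem w hwS =>
        obtain ⟨F, hF, x, hzx⟩ := hzS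
        obtain ⟨G, hG, y, hwy⟩ := hwS
        rw [hzx, hwy]
        exact hiso F hF G hG x y
      | zero => simp [Ezero]
      | add w₁ w₂ _ _ h1 h2 =>
        simp only [Eadd, mul_add, Finset.sum_add_distrib, h1, h2, add_zero]
      | smul c w _ h1 =>
        simp only [Esmul]
        rw [Finset.sum_congr rfl fun i _ => mul_left_comm (z i) c (w i), ← Finset.mul_sum, h1,
          mul_zero]
    | zero => intro w hw; simp [Ezero]
    | add z₁ z₂ _ _ h1 h2 =>
      intro w hw
      simp only [Eadd, add_mul, Finset.sum_add_distrib, h1 w hw, h2 w hw, add_zero]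
    | smul c z _ h1 =>
      intro w hw
      simp only [Esmul, mul_assoc, ← Finset.mul_sum, h1 w hw, mul_zero]
  have hgen : ∀ F ∈ 𝓕, ∀ y : Fin m → ℝ, (WithLp.toLp 2 (grad F y) : E) ∈ Z :=
    fun F hF y => Submodule.subset_span ⟨F, hF, y, rfl⟩
  set k := Module.finrank ℂ Z with hk
  set b := stdOrthonormalBasis ℂ Z with hb
  set e : Fin k → E := fun j => (b j : E) with he
  have heZ : ∀ j, e j ∈ Z := fun j => (b j).2
  have O : ∀ j l, ∑ i, (starRingEnd ℂ) (e j i) * e l i = if j = l then 1 else 0 := by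
    intro j l
    have h1 := orthonormal_iff_ite.mp b.orthonormal j l
    rw [Submodule.coe_inner, PiLp.inner_apply] at h1
    simp only [RCLike.inner_apply'] at h1
    exact h1
  have O' : ∀ j l, ∑ i, e j i * (starRingEnd ℂ) (e l i) = if j = l then 1 else 0 := by
    intro j l
    have h1 : ∑ i, e j i * (starRingEnd ℂ) (e l i)
        = (starRingEnd ℂ) (∑ i, (starRingEnd ℂ) (e j i) * e l i) := by
      rw [map_sum]
      exact Finset.sum_congr rfl fun i _ => by rw [map_mul, Complex.conj_conj]
    rw [h1, O, apply_ite (starRingEnd ℂ)]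
    simp
  set c2 : ℝ := Real.sqrt 2 with hc2
  have hc2pos : (0:ℝ) < c2 := Real.sqrt_pos.mpr (by norm_num)
  have hc2sq : c2 * c2 = 2 := Real.mul_self_sqrt (by norm_num)
  -- the ℝ-linear map v ↦ ∑ⱼ conj(vⱼ) • eⱼ
  set ζ : (Fin k → ℂ) →ₗ[ℝ] E :=
    { toFun := fun v => ∑ j, (starRingEnd ℂ) (v j) • e j,
      map_add' := by
        intro v w
        simp only [Pi.add_apply, map_add, add_smul, Finset.sum_add_distrib]
      map_smul' := by
        intro r v
        simp only [Pi.smul_apply, RingHom.id_apply]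
        rw [Finset.smul_sum]
        refine Finset.sum_congr rfl fun j _ => ?_
        rw [show (r • v j : ℂ) = (r : ℂ) * v j from Complex.real_smul, map_mul]
        rw [show (starRingEnd ℂ) (r:ℂ) = (r:ℂ) by simp]
        rw [mul_smul, Complex.coe_smul] } with hζdef
  have hζmem : ∀ v, ζ v ∈ Z := by
    intro v
    show (∑ j, (starRingEnd ℂ) (v j) • e j) ∈ Z
    exact Submodule.sum_mem _ (fun j _ => Submodule.smul_mem _ _ (heZ j))
  have hζ : ∀ (v : Fin k → ℂ) (i : Fin m), ζ v i = ∑ j, (starRingEnd ℂ) (v j) * e j i := by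
    intro v i
    show (∑ j, (starRingEnd ℂ) (v j) • e j) i = _
    rw [show ((∑ j, (starRingEnd ℂ) (v j) • e j : E) i)
        = ∑ j, ((starRingEnd ℂ) (v j) • e j : E) i from by rw [WithLp.ofLp_sum, Finset.sum_apply]]
    exact Finset.sum_congr rfl fun j _ => rfl
  -- the map a
  set A : (Fin k → ℂ) →ₗ[ℝ] (Fin m → ℝ) :=
    { toFun := fun v i => c2 * (ζ v i).re,
      map_add' := by
        intro v w; funext i
        show c2 * (ζ (v + w) i).re = c2 * (ζ v i).re + c2 * (ζ w i).re
        rw [map_add, Eadd, Complex.add_re]; ring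
      map_smul' := by
        intro r v; funext i
        show c2 * (ζ (r • v) i).re = r * (c2 * (ζ v i).re)
        rw [map_smul]
        rw [show ((r • (ζ v : E)) i) = r • (ζ v i) from rfl]
        rw [Complex.real_smul, Complex.re_ofReal_mul]
        ring } with hA
  have hAapp : ∀ v i, A v i = c2 * (ζ v i).re := fun _ _ => rfl
  -- the map π
  set P : (Fin m → ℝ) →ₗ[ℝ] (Fin k → ℂ) :=
    { toFun := fun x j => (c2 : ℂ) * ∑ i, (x i : ℂ) * e j i,
      map_add' := by
        intro x y; funext j
        show (c2 : ℂ) * ∑ i, (((x + y) i : ℝ) : ℂ) * e j i = _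
        simp only [Pi.add_apply, Complex.ofReal_add, add_mul, Finset.sum_add_distrib, mul_add]
      map_smul' := by
        intro r x; funext j
        show (c2 : ℂ) * ∑ i, (((r • x) i : ℝ) : ℂ) * e j i
          = r • ((c2 : ℂ) * ∑ i, ((x i : ℝ) : ℂ) * e j i)
        rw [Complex.real_smul]
        simp only [Pi.smul_apply, smul_eq_mul, Complex.ofReal_mul, Finset.mul_sum]
        exact Finset.sum_congr rfl fun i _ => by ring } with hP
  have hPapp : ∀ x j, P x j = (c2 : ℂ) * ∑ i, (x i : ℂ) * e j i := fun _ _ => rfl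
  -- Condition 1
  have hC1 : ∀ v w : Fin k → ℂ,
      ∑ i, A v i * A w i = (∑ j, (starRingEnd ℂ) (v j) * w j).re := by
    intro v w
    have step1 : ∑ i, A v i * A w i
        = (∑ i, ζ v i * ζ w i).re + (∑ i, ζ v i * (starRingEnd ℂ) (ζ w i)).re := by
      rw [Complex.re_sum, Complex.re_sum, ← Finset.sum_add_distrib]
      exact Finset.sum_congr rfl fun i _ => re_mul_re hc2sq _ _
    rw [step1, hBZ _ (hζmem v) _ (hζmem w), Complex.zero_re, zero_add]
    congr 1
    calc ∑ i, ζ v i * (starRingEnd ℂ) (ζ w i)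
        = ∑ i, ∑ j, ∑ l, ((starRingEnd ℂ) (v j) * w l) * (e j i * (starRingEnd ℂ) (e l i)) := by
          refine Finset.sum_congr rfl fun i _ => ?_
          rw [hζ, hζ, map_sum, Finset.sum_mul]
          refine Finset.sum_congr rfl fun j _ => ?_
          rw [Finset.mul_sum]
          refine Finset.sum_congr rfl fun l _ => ?_
          rw [map_mul, Complex.conj_conj]; ring
      _ = ∑ j, ∑ l, ((starRingEnd ℂ) (v j) * w l) * ∑ i, e j i * (starRingEnd ℂ) (e l i) := by
          rw [Finset.sum_comm]
          refine Finset.sum_congr rfl fun j _ => ?_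
          rw [Finset.sum_comm]
          exact Finset.sum_congr rfl fun l _ => (Finset.mul_sum _ _ _).symm
      _ = ∑ j, (starRingEnd ℂ) (v j) * w j := by
          simp [O', mul_ite, Finset.sum_ite_eq]
  -- Condition 2
  have hC2 : ∀ (x : Fin m → ℝ) (v : Fin k → ℂ),
      (∑ j, (starRingEnd ℂ) (P x j) * v j).re = ∑ i, x i * A v i := by
    intro x v
    have hT : ∑ j, (starRingEnd ℂ) (P x j) * v j
        = (c2:ℂ) * (starRingEnd ℂ) (∑ i, (x i:ℂ) * ζ v i) := by
      calc ∑ j, (starRingEnd ℂ) (P x j) * v j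
          = ∑ j, ∑ i, (c2:ℂ) * ((x i:ℂ) * v j * (starRingEnd ℂ) (e j i)) := by
            refine Finset.sum_congr rfl fun j _ => ?_
            rw [hPapp, map_mul, map_sum]
            rw [show (starRingEnd ℂ) ((c2:ℝ):ℂ) = ((c2:ℝ):ℂ) from by simp]
            rw [mul_assoc, Finset.sum_mul, Finset.mul_sum]
            refine Finset.sum_congr rfl fun i _ => ?_
            rw [map_mul, show (starRingEnd ℂ) ((x i : ℝ):ℂ) = ((x i : ℝ):ℂ) from by simp]
            ring
        _ = ∑ i, ∑ j, (c2:ℂ) * ((x i:ℂ) * v j * (starRingEnd ℂ) (e j i)) := Finset.sum_comm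
        _ = (c2:ℂ) * (starRingEnd ℂ) (∑ i, (x i:ℂ) * ζ v i) := by
            rw [map_sum, Finset.mul_sum]
            refine Finset.sum_congr rfl fun i _ => ?_
            rw [map_mul, show (starRingEnd ℂ) ((x i : ℝ):ℂ) = ((x i : ℝ):ℂ) from by simp,
              hζ, map_sum, Finset.mul_sum, Finset.mul_sum]
            refine Finset.sum_congr rfl fun j _ => ?_
            rw [map_mul, Complex.conj_conj]
            ring
    rw [hT, Complex.re_ofReal_mul, Complex.conj_re]
    rw [show ∑ i, x i * A v i = c2 * ∑ i, ((x i:ℂ) * ζ v i).re from by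
      rw [Finset.mul_sum]
      refine Finset.sum_congr rfl fun i _ => ?_
      rw [hAapp, Complex.re_ofReal_mul]; ring]
    rw [← Complex.re_sum]
  refine ⟨k, A, P, hC1, hC2, ?_⟩
  intro F hF
  have hFdiff : Differentiable ℝ F := (hsmooth F hF).differentiable (by simp)
  constructor
  · -- projection property
    intro x
    set d : Fin m → ℝ := A (P x) - x with hd
    have hdA : ∀ v, ∑ i, d i * A v i = 0 := by
      intro v
      have h1 := hC1 (P x) v
      have h2 := hC2 x v
      have h3 : ∑ i, d i * A v i = ∑ i, A (P x) i * A v i - ∑ i, x i * A v i := by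
        rw [← Finset.sum_sub_distrib]
        refine Finset.sum_congr rfl fun i _ => ?_
        rw [hd]
        show (A (P x) i - x i) * A v i = _
        ring
      rw [h3, h1, ← h2, sub_self]
    have hζsingle : ∀ (j : Fin k) (c : ℂ) (i : Fin m), ζ (Pi.single j c) i
        = (starRingEnd ℂ) c * e j i := by
      intro j c i
      rw [hζ]
      rw [Finset.sum_eq_single j]
      · rw [Pi.single_eq_same]
      · intro l _ hl; rw [Pi.single_eq_of_ne hl]; simp
      · intro h; exact absurd (Finset.mem_univ j) h
    have hde : ∀ j, ∑ i, (d i : ℂ) * e j i = 0 := by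
      intro j
      have hfact : ∀ v : Fin k → ℂ, c2 * ∑ i, d i * (ζ v i).re = 0 := by
        intro v
        rw [Finset.mul_sum, ← hdA v]
        refine Finset.sum_congr rfl fun i _ => ?_
        rw [hAapp]; ring
      have hre : ∑ i, d i * (e j i).re = 0 := by
        have h1 := hfact (Pi.single j 1)
        rw [show (∑ i, d i * (ζ (Pi.single j 1) i).re) = ∑ i, d i * (e j i).re from
          Finset.sum_congr rfl fun i _ => by rw [hζsingle j 1 i, map_one, one_mul]] at h1
        exact (mul_eq_zero.mp h1).resolve_left (ne_of_gt hc2pos)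
      have him : ∑ i, d i * (e j i).im = 0 := by
        have h1 := hfact (Pi.single j Complex.I)
        rw [show (∑ i, d i * (ζ (Pi.single j Complex.I) i).re) = ∑ i, d i * (e j i).im from
          Finset.sum_congr rfl fun i _ => by
            rw [hζsingle j Complex.I i, Complex.conj_I]
            simp [Complex.mul_re]] at h1
        exact (mul_eq_zero.mp h1).resolve_left (ne_of_gt hc2pos)
      apply Complex.ext
      · rw [Complex.re_sum, Complex.zero_re, ← hre]
        exact Finset.sum_congr rfl fun i _ => Complex.re_ofReal_mul _ _
      · rw [Complex.im_sum, Complex.zero_im, ← him]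
        exact Finset.sum_congr rfl fun i _ => by
          rw [Complex.mul_im]; simp
    have hdZ : ∀ g ∈ Z, ∑ i, (d i : ℂ) * g i = 0 := by
      intro g hg
      have hrepr := b.sum_repr ⟨g, hg⟩
      have hg' : ∀ i : Fin m, g i = ∑ j, b.repr ⟨g, hg⟩ j * e j i := by
        intro i
        conv_lhs => rw [show g = ((⟨g, hg⟩ : Z) : E) from rfl, ← hrepr]
        rw [Submodule.coe_sum]
        rw [show ((∑ j, ((b.repr ⟨g, hg⟩ j • b j : Z) : E)) i)
          = ∑ j, ((b.repr ⟨g, hg⟩ j • b j : Z) : E) i from by rw [WithLp.ofLp_sum, Finset.sum_apply]]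
        exact Finset.sum_congr rfl fun j _ => rfl
      calc ∑ i, (d i : ℂ) * g i
          = ∑ i, ∑ j, b.repr ⟨g, hg⟩ j * ((d i : ℂ) * e j i) := by
            refine Finset.sum_congr rfl fun i _ => ?_
            rw [hg' i, Finset.mul_sum]
            exact Finset.sum_congr rfl fun j _ => by ring
        _ = ∑ j, b.repr ⟨g, hg⟩ j * ∑ i, (d i : ℂ) * e j i := by
            rw [Finset.sum_comm]
            exact Finset.sum_congr rfl fun j _ => (Finset.mul_sum _ _ _).symm
        _ = 0 := by
            rw [Finset.sum_congr rfl fun j _ => by rw [hde j, mul_zero]]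
            exact Finset.sum_const_zero
    have hgrad0 : ∀ y, fderiv ℝ F y d = 0 := by
      intro y
      rw [fderiv_apply_eq_sum_grad]
      exact hdZ (WithLp.toLp 2 (grad F y)) (hgen F hF y)
    have hconst := const_along hFdiff x d hgrad0
    rw [show x + d = A (P x) from by rw [hd]; abel] at hconst
    exact hconst
  · -- Cauchy-Riemann
    intro z v
    have hAc : (fun u => F (A u)) = F ∘ (LinearMap.toContinuousLinearMap A) := rfl
    have hcomp : ∀ w : Fin k → ℂ, fderiv ℝ (fun u => F (A u)) z w = fderiv ℝ F (A z) (A w) := by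
      intro w
      rw [hAc, fderiv_comp z (hFdiff _) (LinearMap.toContinuousLinearMap A).differentiableAt]
      rw [ContinuousLinearMap.fderiv]
      rfl
    set g : Fin m → ℂ := grad F (A z) with hg
    have key : ∀ w : Fin k → ℂ, fderiv ℝ F (A z) (A w)
        = ((c2:ℂ)/2) * ∑ j, w j * ∑ i, (starRingEnd ℂ) (e j i) * g i := by
      intro w
      rw [fderiv_apply_eq_sum_grad]
      have h1 : ∀ i : Fin m, ((A w i : ℝ):ℂ) * g i
          = (c2:ℂ)/2 * (ζ w i * g i + (starRingEnd ℂ) (ζ w i) * g i) := by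
        intro i
        rw [hAapp]
        rw [show ((c2 * (ζ w i).re : ℝ) : ℂ)
            = (c2:ℂ) * (((ζ w i).re : ℝ) : ℂ) from by push_cast; ring]
        rw [show (((ζ w i).re : ℝ) : ℂ) = (ζ w i + (starRingEnd ℂ) (ζ w i))/2 from by
          rw [Complex.add_conj]; push_cast; ring]
        ring
      rw [Finset.sum_congr rfl fun i _ => h1 i, ← Finset.mul_sum, Finset.sum_add_distrib]
      rw [show (∑ i, ζ w i * g i) = 0 from hBZ _ (hζmem w) _ (hgen F hF (A z)), zero_add]
      congr 1
      calc ∑ i, (starRingEnd ℂ) (ζ w i) * g i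
          = ∑ i, ∑ j, w j * ((starRingEnd ℂ) (e j i) * g i) := by
            refine Finset.sum_congr rfl fun i _ => ?_
            rw [hζ, map_sum, Finset.sum_mul]
            refine Finset.sum_congr rfl fun j _ => ?_
            rw [map_mul, Complex.conj_conj]; ring
        _ = ∑ j, w j * ∑ i, (starRingEnd ℂ) (e j i) * g i := by
            rw [Finset.sum_comm]
            exact Finset.sum_congr rfl fun j _ => (Finset.mul_sum _ _ _).symm
    rw [hcomp, hcomp, key, key]
    rw [show ∑ j, (fun i => Complex.I * v i) j * ∑ i, (starRingEnd ℂ) (e j i) * g i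
        = Complex.I * ∑ j, v j * ∑ i, (starRingEnd ℂ) (e j i) * g i from by
      rw [Finset.mul_sum]
      exact Finset.sum_congr rfl fun j _ => by ring]
    ring
end

section
/- Let V ⊆ ℝ^m be a 2-dimensional subspace with orthogonal projection p_V, and let 𝓕 be a family of smooth functions ℝ^m → ℂ such that (∇ₓF)ᵀ p_V ∇ᵧG = 0 for all x, y ∈ ℝ^m and F, G ∈ 𝓕, with p_V∇ᵧQ ≠ 0 for some y and Q ∈ 𝓕. Then there exists an orthonormal basis {u, v} of V such that (∇ₓF)ᵀ(u + iv) = 0 for all x ∈ ℝ^m and F ∈ 𝓕; equivalently, for each F ∈ 𝓕 there is λ_F : ℝ^m → ℂ with p_V(∇ₓF) = λ_F(x)(u + iv). -/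
/-- Key linear algebra lemma: in the complexification of a real plane, two isotropic-paired
vectors with `w ≠ 0` must be proportional. -/
lemma stmt13_key {m : ℕ} (f0 f1 : Fin m → ℝ) (z w : Fin m → ℂ)
    (hz : z ∈ Submodule.span ℂ
      ({fun i => (f0 i : ℂ), fun i => (f1 i : ℂ)} : Set (Fin m → ℂ)))
    (hw : w ∈ Submodule.span ℂ
      ({fun i => (f0 i : ℂ), fun i => (f1 i : ℂ)} : Set (Fin m → ℂ)))
    (hwne : w ≠ 0) (hzw : dotProduct z w = 0) (hww : dotProduct w w = 0) :
    ∃ μ : ℂ, z = μ • w := by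
  classical
  by_cases hmem : z ∈ Submodule.span ℂ ({w} : Set (Fin m → ℂ))
  · obtain ⟨μ, hμ⟩ := Submodule.mem_span_singleton.mp hmem
    exact ⟨μ, hμ.symm⟩
  exfalso
  set R' := Submodule.span ℂ
      ({fun i => (f0 i : ℂ), fun i => (f1 i : ℂ)} : Set (Fin m → ℂ)) with hR'
  have hind : LinearIndependent ℂ ![z, w] := by
    rw [linearIndependent_fin2]
    refine ⟨by simpa using hwne, fun a ha => hmem ?_⟩
    simp only [Matrix.cons_val_one, Matrix.head_cons, Matrix.cons_val_zero] at ha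
    rw [← ha]
    exact Submodule.smul_mem _ a (Submodule.mem_span_singleton_self w)
  have hfd : FiniteDimensional ℂ R' :=
    FiniteDimensional.span_of_finite ℂ ((Set.finite_singleton _).insert _)
  have hle : Submodule.span ℂ ({z, w} : Set (Fin m → ℂ)) ≤ R' := by
    refine Submodule.span_le.mpr ?_
    rintro x hx
    simp only [Set.mem_insert_iff, Set.mem_singleton_iff] at hx
    rcases hx with rfl | rfl
    · exact hz
    · exact hw
  have hrange : Set.range ![z, w] = ({z, w} : Set (Fin m → ℂ)) := by
    ext x
    simp [Fin.exists_fin_two]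
    tauto
  have h2 : Module.finrank ℂ (Submodule.span ℂ ({z, w} : Set (Fin m → ℂ))) = 2 := by
    have := finrank_span_eq_card hind
    rwa [hrange, Fintype.card_fin] at this
  have hub : Module.finrank ℂ R' ≤ 2 := by
    refine le_trans (finrank_span_le_card _) ?_
    rw [Set.toFinset_insert, Set.toFinset_singleton]
    exact (Finset.card_insert_le _ _).trans (by simp)
  have heq := Submodule.eq_of_le_of_finrank_le hle (by rw [h2]; exact hub)
  obtain ⟨α, β, hab⟩ := Submodule.mem_span_pair.mp hw
  have hconjw : (fun i => (starRingEnd ℂ) (w i)) ∈ R' := by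
    refine Submodule.mem_span_pair.mpr ⟨(starRingEnd ℂ) α, (starRingEnd ℂ) β, ?_⟩
    funext i
    have h := congrFun hab i
    simp only [Pi.add_apply, Pi.smul_apply, smul_eq_mul] at h ⊢
    rw [← h]
    simp [map_add, map_mul, Complex.conj_ofReal]
  rw [← heq] at hconjw
  obtain ⟨γ, δ, h⟩ := Submodule.mem_span_pair.mp hconjw
  have hzero : dotProduct (fun i => (starRingEnd ℂ) (w i)) w = 0 := by
    rw [← h]
    simp [add_dotProduct, smul_dotProduct, hzw, hww]
  have hcast : ((∑ i, Complex.normSq (w i) : ℝ) : ℂ) = 0 := by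
    rw [← hzero, dotProduct]
    push_cast
    exact Finset.sum_congr rfl fun i _ => Complex.normSq_eq_conj_mul_self
  have hs : ∑ i, Complex.normSq (w i) = 0 := by exact_mod_cast hcast
  apply hwne
  funext i0
  have h0 := (Finset.sum_eq_zero_iff_of_nonneg
    (fun i _ => Complex.normSq_nonneg (w i))).mp hs i0 (Finset.mem_univ _)
  simpa using Complex.normSq_eq_zero.mp h0

/-- Let `V ⊆ ℝ^m` be a 2-dimensional subspace with orthogonal projection `P` (symmetric
idempotent of rank 2) and `𝓕` a family of smooth functions with `(∇ₓF)ᵀ P ∇ᵧG = 0` for all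
`F, G ∈ 𝓕`, `x, y`, and `P∇ᵧQ ≠ 0` for some `Q ∈ 𝓕`, `y`. Then `V` has an orthonormal basis
`{u, v}` with `(∇ₓF)ᵀ(u + iv) = 0` for all `x, F`; equivalently each `P(∇ₓF)` is a complex
multiple of `u + iv`. -/
theorem stmt13 {m : ℕ} (P : Matrix (Fin m) (Fin m) ℝ)
    (hsymm : P.IsSymm) (hidem : P * P = P) (hrank : P.rank = 2)
    (𝓕 : Set ((Fin m → ℝ) → ℂ)) (hsmooth : ∀ F ∈ 𝓕, ContDiff ℝ (⊤ : ℕ∞) F)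
    (haxis : ∀ F ∈ 𝓕, ∀ G ∈ 𝓕, ∀ x y : Fin m → ℝ,
      ∑ i, grad F x i * (P.map (fun t => (t : ℂ))).mulVec (grad G y) i = 0)
    (hnz : ∃ Q ∈ 𝓕, ∃ y : Fin m → ℝ,
      (P.map (fun t => (t : ℂ))).mulVec (grad Q y) ≠ 0) :
    ∃ u v : Fin m → ℝ, P.mulVec u = u ∧ P.mulVec v = v ∧
      (∑ i, u i ^ 2 = 1) ∧ (∑ i, v i ^ 2 = 1) ∧ (∑ i, u i * v i = 0) ∧
      (∀ F ∈ 𝓕, ∀ x : Fin m → ℝ, ∑ i, grad F x i * ((u i : ℂ) + Complex.I * (v i : ℂ)) = 0) ∧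
      (∀ F ∈ 𝓕, ∃ lam : (Fin m → ℝ) → ℂ, ∀ (x : Fin m → ℝ) (i : Fin m),
        (P.map (fun t => (t : ℂ))).mulVec (grad F x) i
          = lam x * ((u i : ℂ) + Complex.I * (v i : ℂ))) := by
  classical
  obtain ⟨Q, hQ, y₀, hQy⟩ := hnz
  set Pc : Matrix (Fin m) (Fin m) ℂ := P.map (fun t => (t : ℂ)) with hPc
  have hPcsymm : Pc.transpose = Pc := by
    rw [hPc, ← Matrix.transpose_map, show P.transpose = P from hsymm]
  have hPcidem : Pc * Pc = Pc := by
    ext i j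
    have h : ∑ k, P i k * P k j = P i j := by rw [← Matrix.mul_apply, hidem]
    simp only [Matrix.mul_apply, hPc, Matrix.map_apply]
    rw [← h]
    push_cast
    rfl
  set g : Fin m → ℂ := grad Q y₀ with hg
  set w : Fin m → ℂ := Pc.mulVec g with hw
  have hPw : Pc.mulVec w = w := by
    rw [hw, Matrix.mulVec_mulVec, hPcidem]
  have hdotw : ∀ (c : Fin m → ℂ), Pc.mulVec c = c →
      dotProduct c w = dotProduct c g := by
    intro c hc
    rw [hw, Matrix.dotProduct_mulVec, ← Matrix.mulVec_transpose, hPcsymm, hc]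
  have hww : dotProduct w w = 0 := by
    rw [hdotw w hPw, dotProduct_comm]
    simpa [dotProduct] using haxis Q hQ Q hQ y₀ y₀
  -- real and imaginary structure of w
  have hsum : ∑ i, w i * w i = 0 := hww
  have hre : ∑ i, ((w i).re * (w i).re - (w i).im * (w i).im) = 0 := by
    have h := congrArg Complex.re hsum
    simpa [Complex.re_sum, Complex.mul_re] using h
  have him : ∑ i, (w i).re * (w i).im = 0 := by
    have h := congrArg Complex.im hsum
    simp only [Complex.im_sum, Complex.mul_im, Complex.zero_im] at h
    have h2 : (2:ℝ) * ∑ i, (w i).re * (w i).im = 0 := by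
      rw [Finset.mul_sum]
      rw [← h]
      exact Finset.sum_congr rfl fun i _ => by ring
    linarith
  set A := ∑ i, (w i).re * (w i).re with hA
  set B := ∑ i, (w i).im * (w i).im with hB
  have hAB : A = B := by
    have := Finset.sum_sub_distrib (f := fun i => (w i).re * (w i).re)
      (g := fun i => (w i).im * (w i).im) (s := Finset.univ)
    rw [hA, hB]
    have h := hre
    rw [Finset.sum_sub_distrib] at h
    linarith
  have hApos : 0 < A := by
    have hne : ∃ i, w i ≠ 0 := by
      by_contra hc
      push_neg at hc
      exact hQy (funext hc)
    obtain ⟨i0, hi0⟩ := hne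
    have hABsum : A + B = ∑ i, Complex.normSq (w i) := by
      rw [hA, hB, ← Finset.sum_add_distrib]
      exact Finset.sum_congr rfl fun i _ => by rw [Complex.normSq_apply]
    have hpos : 0 < ∑ i, Complex.normSq (w i) := by
      have hle : Complex.normSq (w i0) ≤ ∑ i, Complex.normSq (w i) :=
        Finset.single_le_sum (fun i _ => Complex.normSq_nonneg (w i)) (Finset.mem_univ i0)
      have : 0 < Complex.normSq (w i0) := by
        rcases lt_or_eq_of_le (Complex.normSq_nonneg (w i0)) with h | h
        · exact h
        · exact absurd (Complex.normSq_eq_zero.mp h.symm) hi0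
      linarith
    have : 0 < A + B := by rw [hABsum]; exact hpos
    linarith [hAB]
  set s : ℝ := Real.sqrt A with hsdef
  have hspos : 0 < s := Real.sqrt_pos.mpr hApos
  have hs2 : s * s = A := Real.mul_self_sqrt hApos.le
  have hsne : s ≠ 0 := ne_of_gt hspos
  have hsCne : (s : ℂ) ≠ 0 := by exact_mod_cast hsne
  set u : Fin m → ℝ := fun i => (w i).re / s with hu
  set v : Fin m → ℝ := fun i => (w i).im / s with hv
  -- P fixes u and v
  have hPa : P.mulVec (fun i => (w i).re) = fun i => (w i).re := by
    funext i
    have h := congrArg Complex.re (congrFun hPw i)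
    simpa [Matrix.mulVec, dotProduct, hPc, Matrix.map_apply, Complex.re_sum,
      Complex.mul_re] using h
  have hPb : P.mulVec (fun i => (w i).im) = fun i => (w i).im := by
    funext i
    have h := congrArg Complex.im (congrFun hPw i)
    simpa [Matrix.mulVec, dotProduct, hPc, Matrix.map_apply, Complex.im_sum,
      Complex.mul_im] using h
  have hueq : u = s⁻¹ • (fun i => (w i).re) := by
    funext i; simp [hu, div_eq_inv_mul]
  have hveq : v = s⁻¹ • (fun i => (w i).im) := by
    funext i; simp [hv, div_eq_inv_mul]
  have hPu : P.mulVec u = u := by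
    rw [hueq, Matrix.mulVec_smul, hPa]
  have hPv : P.mulVec v = v := by
    rw [hveq, Matrix.mulVec_smul, hPb]
  -- norms
  have hu2 : ∑ i, u i ^ 2 = 1 := by
    have : ∑ i, u i ^ 2 = A / (s * s) := by
      rw [hA, Finset.sum_div]
      exact Finset.sum_congr rfl fun i _ => by rw [hu]; ring
    rw [this, hs2, div_self hApos.ne']
  have hv2 : ∑ i, v i ^ 2 = 1 := by
    have : ∑ i, v i ^ 2 = B / (s * s) := by
      rw [hB, Finset.sum_div]
      exact Finset.sum_congr rfl fun i _ => by rw [hv]; ring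
    rw [this, hs2, hAB, div_self (by rw [← hAB]; exact hApos.ne')]
  have huv : ∑ i, u i * v i = 0 := by
    have : ∑ i, u i * v i = (∑ i, (w i).re * (w i).im) / (s * s) := by
      rw [Finset.sum_div]
      exact Finset.sum_congr rfl fun i _ => by rw [hu, hv]; ring
    rw [this, him, zero_div]
  -- u + iv vs w
  have hwi : ∀ i, ((u i : ℂ) + Complex.I * (v i : ℂ)) = (s : ℂ)⁻¹ * w i := by
    intro i
    have hsinv : ((s : ℂ))⁻¹ = ((s⁻¹ : ℝ) : ℂ) := by push_cast; rfl
    rw [hsinv]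
    apply Complex.ext
    · simp [hu, hv, div_eq_inv_mul]
    · simp [hv, div_eq_inv_mul]
  have horth : ∀ F ∈ 𝓕, ∀ x : Fin m → ℝ,
      ∑ i, grad F x i * ((u i : ℂ) + Complex.I * (v i : ℂ)) = 0 := by
    intro F hF x
    have h0 : ∑ i, grad F x i * w i = 0 := haxis F hF Q hQ x y₀
    calc ∑ i, grad F x i * ((u i : ℂ) + Complex.I * (v i : ℂ))
        = (s : ℂ)⁻¹ * ∑ i, grad F x i * w i := by
          rw [Finset.mul_sum]
          exact Finset.sum_congr rfl fun i _ => by rw [hwi i]; ring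
      _ = 0 := by rw [h0, mul_zero]
  -- the span setup for the key lemma
  set S := LinearMap.range P.mulVecLin with hS
  have hfr : Module.finrank ℝ S = 2 := hrank
  have bS : Module.Basis (Fin 2) ℝ S := Module.finBasisOfFinrankEq ℝ S hfr
  set f0 : Fin m → ℝ := (bS 0 : Fin m → ℝ) with hf0
  set f1 : Fin m → ℝ := (bS 1 : Fin m → ℝ) with hf1
  set R' := Submodule.span ℂ
      ({fun i => (f0 i : ℂ), fun i => (f1 i : ℂ)} : Set (Fin m → ℂ)) with hR'
  have hreal : ∀ x : Fin m → ℝ, x ∈ S → (fun i => (x i : ℂ)) ∈ R' := by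
    intro x hx
    have hrep := Module.Basis.sum_repr bS ⟨x, hx⟩
    rw [Fin.sum_univ_two] at hrep
    have hx' : x = bS.repr ⟨x, hx⟩ 0 • f0 + bS.repr ⟨x, hx⟩ 1 • f1 := by
      have := congrArg (Subtype.val) hrep
      simpa [hf0, hf1] using this.symm
    refine Submodule.mem_span_pair.mpr
      ⟨((bS.repr ⟨x, hx⟩ 0 : ℝ) : ℂ), ((bS.repr ⟨x, hx⟩ 1 : ℝ) : ℂ), ?_⟩
    funext i
    have h := congrFun hx' i
    simp only [Pi.add_apply, Pi.smul_apply, smul_eq_mul] at h ⊢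
    rw [h]
    push_cast
    ring
  have hcol : ∀ j, (fun i => P i j) ∈ S := by
    intro j
    refine ⟨Pi.single j 1, ?_⟩
    funext i
    simp [Matrix.mulVecLin_apply, Matrix.mulVec_single]
  have hPcmem : ∀ c : Fin m → ℂ, Pc.mulVec c ∈ R' := by
    intro c
    have hrw : Pc.mulVec c = ∑ j, c j • (fun i => ((P i j : ℝ) : ℂ)) := by
      funext i
      simp [Matrix.mulVec, dotProduct, hPc, Matrix.map_apply, Finset.sum_apply,
        mul_comm]
    rw [hrw]
    exact Submodule.sum_mem _ fun j _ => Submodule.smul_mem _ _ (hreal _ (hcol j))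
  refine ⟨u, v, hPu, hPv, hu2, hv2, huv, horth, ?_⟩
  intro F hF
  have hex : ∀ x : Fin m → ℝ, ∃ μ : ℂ, Pc.mulVec (grad F x) = μ • w := by
    intro x
    set z : Fin m → ℂ := Pc.mulVec (grad F x) with hz
    have hPz : Pc.mulVec z = z := by rw [hz, Matrix.mulVec_mulVec, hPcidem]
    have hzw : dotProduct z w = 0 := by
      rw [hdotw z hPz, dotProduct_comm]
      simpa [dotProduct] using haxis Q hQ F hF y₀ x
    exact stmt13_key f0 f1 z w (hPcmem _) (hw ▸ hPcmem g) hQy hzw hww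
  refine ⟨fun x => Classical.choose (hex x) * (s : ℂ), fun x i => ?_⟩
  have hμ := congrFun (Classical.choose_spec (hex x)) i
  simp only [Pi.smul_apply, smul_eq_mul] at hμ
  rw [hμ, hwi i]
  field_simp
end

section
/- Let d, m ∈ ℕ and let F, G : ℂ × ℝ^m → ℂ be homogeneous polynomials of degree d that are holomorphic in the ℂ factor, written F(z,x) = Σ_{k=0}^d z^{d−k}F_k(x) and G(z,x) = Σ_{k=0}^d z^{d−k}G_k(x) with F_k, G_k homogeneous of degree k. Then (∇_{(z,x)}F)ᵀ∇_{(z,x)}G = 0 for all (z,x) if and only if (∇ₓρ(F))ᵀ∇ₓρ(G) = 0 for all x ∈ ℝ^m, where ρ(F)(x) = F(1,x) = Σ_k F_k(x) and ρ(G)(x) = G(1,x). -/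
/-- The homogeneous degree-`d` function on `ℂ × ℝ^m`, holomorphic in the `ℂ` factor, built
from homogeneous pieces `F_0,…,F_d`: `F(z,x) = Σ_{k=0}^d z^{d-k} F_k(x)`. -/
noncomputable def mk (d : ℕ) {m : ℕ} (Fk : ℕ → (Fin m → ℝ) → ℂ) :
    ℂ × (Fin m → ℝ) → ℂ :=
  fun q => ∑ k ∈ Finset.range (d + 1), q.1 ^ (d - k) * Fk k q.2

/-- The reduction `ρ(F)(x) = F(1,x) = Σ_k F_k(x)`. -/
noncomputable def redu (d : ℕ) {m : ℕ} (Fk : ℕ → (Fin m → ℝ) → ℂ) :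
    (Fin m → ℝ) → ℂ :=
  fun x => ∑ k ∈ Finset.range (d + 1), Fk k x

/-- The complex-bilinear pairing of the complexified Euclidean gradients of `F, G` on
`ℂ × ℝ^m ≅ ℝ^{m+2}` at a point `p`. -/
noncomputable def pairCR {m : ℕ} (F G : ℂ × (Fin m → ℝ) → ℂ) (p : ℂ × (Fin m → ℝ)) : ℂ :=
  fderiv ℝ F p (1, 0) * fderiv ℝ G p (1, 0)
    + fderiv ℝ F p (Complex.I, 0) * fderiv ℝ G p (Complex.I, 0)
    + ∑ i, fderiv ℝ F p (0, Pi.single i 1) * fderiv ℝ G p (0, Pi.single i 1)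

/-- The complex-bilinear pairing of gradients on `ℝ^m`. -/
noncomputable def pairR {m : ℕ} (F G : (Fin m → ℝ) → ℂ) (x : Fin m → ℝ) : ℂ :=
  ∑ i, fderiv ℝ F x (Pi.single i 1) * fderiv ℝ G x (Pi.single i 1)

open Finset Polynomial

variable {m : ℕ}

lemma hasFDerivAt_term (n : ℕ) (f : (Fin m → ℝ) → ℂ) (p : ℂ × (Fin m → ℝ))
    (hf : DifferentiableAt ℝ f p.2) :
    HasFDerivAt (fun q : ℂ × (Fin m → ℝ) => q.1 ^ n * f q.2)
      ((p.1 ^ n) • ((fderiv ℝ f p.2).comp (ContinuousLinearMap.snd ℝ ℂ (Fin m → ℝ)))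
        + (f p.2) • (((n : ℂ) * p.1 ^ (n - 1)) • (ContinuousLinearMap.fst ℝ ℂ (Fin m → ℝ)))) p := by
  have h1 : HasFDerivAt (fun q : ℂ × (Fin m → ℝ) => q.1 ^ n)
      (((n : ℂ) * p.1 ^ (n - 1)) • (ContinuousLinearMap.fst ℝ ℂ (Fin m → ℝ))) p := by
    have := ((hasDerivAt_pow n p.1).hasFDerivAt.restrictScalars ℝ).comp p (hasFDerivAt_fst (p := p))
    refine this.congr_fderiv ?_
    ext v <;> simp [mul_comm]
  have h2 : HasFDerivAt (fun q : ℂ × (Fin m → ℝ) => f q.2)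
      ((fderiv ℝ f p.2).comp (ContinuousLinearMap.snd ℝ ℂ (Fin m → ℝ))) p :=
    (hf.hasFDerivAt).comp p (hasFDerivAt_snd (p := p))
  exact h1.mul h2

lemma hasFDerivAt_mk (d : ℕ) (Fk : ℕ → (Fin m → ℝ) → ℂ) (hFs : ∀ k, ContDiff ℝ (⊤ : ℕ∞) (Fk k))
    (p : ℂ × (Fin m → ℝ)) :
    HasFDerivAt (mk d Fk)
      (∑ k ∈ range (d + 1),
        ((p.1 ^ (d - k)) • ((fderiv ℝ (Fk k) p.2).comp (ContinuousLinearMap.snd ℝ ℂ (Fin m → ℝ)))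
          + (Fk k p.2) • ((((d - k : ℕ) : ℂ) * p.1 ^ (d - k - 1)) • (ContinuousLinearMap.fst ℝ ℂ (Fin m → ℝ))))) p := by
  exact HasFDerivAt.fun_sum fun k _ =>
    hasFDerivAt_term (d - k) (Fk k) p ((hFs k).differentiable (by simp)).differentiableAt

lemma fderiv_mk_z (d : ℕ) (Fk : ℕ → (Fin m → ℝ) → ℂ) (hFs : ∀ k, ContDiff ℝ (⊤ : ℕ∞) (Fk k))
    (p : ℂ × (Fin m → ℝ)) (v : ℂ) :
    fderiv ℝ (mk d Fk) p (v, 0)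
      = v * ∑ k ∈ range (d + 1), ((d - k : ℕ) : ℂ) * p.1 ^ (d - k - 1) * Fk k p.2 := by
  rw [(hasFDerivAt_mk d Fk hFs p).fderiv]
  simp [ContinuousLinearMap.sum_apply, Finset.mul_sum]
  exact Finset.sum_congr rfl fun k _ => by ring

lemma fderiv_mk_x (d : ℕ) (Fk : ℕ → (Fin m → ℝ) → ℂ) (hFs : ∀ k, ContDiff ℝ (⊤ : ℕ∞) (Fk k))
    (p : ℂ × (Fin m → ℝ)) (w : Fin m → ℝ) :
    fderiv ℝ (mk d Fk) p (0, w)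
      = ∑ k ∈ range (d + 1), p.1 ^ (d - k) * fderiv ℝ (Fk k) p.2 w := by
  rw [(hasFDerivAt_mk d Fk hFs p).fderiv]
  simp [ContinuousLinearMap.sum_apply, Complex.real_smul]

lemma pairCR_eq (d : ℕ) (Fk Gk : ℕ → (Fin m → ℝ) → ℂ)
    (hFs : ∀ k, ContDiff ℝ (⊤ : ℕ∞) (Fk k)) (hGs : ∀ k, ContDiff ℝ (⊤ : ℕ∞) (Gk k))
    (p : ℂ × (Fin m → ℝ)) :
    pairCR (mk d Fk) (mk d Gk) p
      = ∑ i, (∑ k ∈ range (d + 1), p.1 ^ (d - k) * fderiv ℝ (Fk k) p.2 (Pi.single i 1))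
          * (∑ l ∈ range (d + 1), p.1 ^ (d - l) * fderiv ℝ (Gk l) p.2 (Pi.single i 1)) := by
  unfold pairCR
  rw [fderiv_mk_z d Fk hFs p 1, fderiv_mk_z d Gk hGs p 1,
    fderiv_mk_z d Fk hFs p Complex.I, fderiv_mk_z d Gk hGs p Complex.I]
  simp only [fderiv_mk_x d Fk hFs p, fderiv_mk_x d Gk hGs p]
  set A := ∑ k ∈ range (d + 1), ((d - k : ℕ) : ℂ) * p.1 ^ (d - k - 1) * Fk k p.2
  set B := ∑ k ∈ range (d + 1), ((d - k : ℕ) : ℂ) * p.1 ^ (d - k - 1) * Gk k p.2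
  have : Complex.I * A * (Complex.I * B) = -(A * B) := by
    rw [show Complex.I * A * (Complex.I * B) = Complex.I * Complex.I * (A * B) by ring,
      Complex.I_mul_I]; ring
  rw [this]; ring

lemma fderiv_redu (d : ℕ) (Fk : ℕ → (Fin m → ℝ) → ℂ) (hFs : ∀ k, ContDiff ℝ (⊤ : ℕ∞) (Fk k))
    (x w : Fin m → ℝ) :
    fderiv ℝ (redu d Fk) x w = ∑ k ∈ range (d + 1), fderiv ℝ (Fk k) x w := by
  have : HasFDerivAt (redu d Fk) (∑ k ∈ range (d + 1), fderiv ℝ (Fk k) x) x :=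
    HasFDerivAt.fun_sum fun k _ => (((hFs k).differentiable (by simp)) x).hasFDerivAt
  rw [this.fderiv]
  simp [ContinuousLinearMap.sum_apply]

lemma pairR_eq (d : ℕ) (Fk Gk : ℕ → (Fin m → ℝ) → ℂ)
    (hFs : ∀ k, ContDiff ℝ (⊤ : ℕ∞) (Fk k)) (hGs : ∀ k, ContDiff ℝ (⊤ : ℕ∞) (Gk k))
    (x : Fin m → ℝ) :
    pairR (redu d Fk) (redu d Gk) x
      = ∑ i, (∑ k ∈ range (d + 1), fderiv ℝ (Fk k) x (Pi.single i 1))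
          * (∑ l ∈ range (d + 1), fderiv ℝ (Gk l) x (Pi.single i 1)) := by
  unfold pairR
  simp only [fderiv_redu d Fk hFs x, fderiv_redu d Gk hGs x]

lemma fderiv_homog (k : ℕ) (f : (Fin m → ℝ) → ℂ) (hf : ContDiff ℝ (⊤ : ℕ∞) f)
    (hh : ∀ t : ℝ, 0 < t → ∀ x, f (t • x) = (t : ℂ) ^ k * f x)
    (t : ℝ) (ht : 0 < t) (x w : Fin m → ℝ) :
    (t : ℂ) * fderiv ℝ f (t • x) w = (t : ℂ) ^ k * fderiv ℝ f x w := by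
  have hdiff : Differentiable ℝ f := hf.differentiable (by simp)
  have hsc : HasFDerivAt (fun y : Fin m → ℝ => t • y)
      (t • ContinuousLinearMap.id ℝ (Fin m → ℝ)) x := (hasFDerivAt_id x).const_smul t
  have h1 : HasFDerivAt (fun y => f (t • y))
      ((fderiv ℝ f (t • x)).comp (t • ContinuousLinearMap.id ℝ (Fin m → ℝ))) x :=
    (hdiff (t • x)).hasFDerivAt.comp x hsc
  have h2 : HasFDerivAt (fun y => (t : ℂ) ^ k * f y)
      ((t : ℂ) ^ k • fderiv ℝ f x) x :=
    ((hdiff x).hasFDerivAt).const_mul ((t : ℂ) ^ k)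
  have h1' : HasFDerivAt (fun y => (t : ℂ) ^ k * f y)
      ((fderiv ℝ f (t • x)).comp (t • ContinuousLinearMap.id ℝ (Fin m → ℝ))) x := by
    have : (fun y => f (t • y)) = fun y => (t : ℂ) ^ k * f y := funext (hh t ht)
    rwa [this] at h1
  have := h1'.unique h2
  have happ := congrFun (congrArg DFunLike.coe this) w
  simpa [Complex.real_smul, mul_comm] using happ

lemma reflect_sum {α : Type*} (N : ℕ) (s : Finset α) (f : α → ℂ[X]) :
    Polynomial.reflect N (∑ i ∈ s, f i) = ∑ i ∈ s, Polynomial.reflect N (f i) := by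
  classical
  induction s using Finset.induction_on with
  | empty => simp
  | insert _ _ ha ih => simp [Finset.sum_insert ha, Polynomial.reflect_add, ih]

/-- For `F(z,x) = Σ z^{d-k}F_k(x)` and `G(z,x) = Σ z^{d-k}G_k(x)` with `F_k, G_k` smooth and
homogeneous of degree `k`: `(∇F)ᵀ∇G = 0` on `ℂ × ℝ^m` iff `(∇ρ(F))ᵀ∇ρ(G) = 0` on `ℝ^m`. -/
theorem stmt14 (d m : ℕ) (Fk Gk : ℕ → (Fin m → ℝ) → ℂ)
    (hFs : ∀ k, ContDiff ℝ (⊤ : ℕ∞) (Fk k)) (hGs : ∀ k, ContDiff ℝ (⊤ : ℕ∞) (Gk k))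
    (hFh : ∀ k, ∀ t : ℝ, 0 < t → ∀ x, Fk k (t • x) = (t : ℂ) ^ k * Fk k x)
    (hGh : ∀ k, ∀ t : ℝ, 0 < t → ∀ x, Gk k (t • x) = (t : ℂ) ^ k * Gk k x) :
    (∀ p : ℂ × (Fin m → ℝ), pairCR (mk d Fk) (mk d Gk) p = 0) ↔
    (∀ x : Fin m → ℝ, pairR (redu d Fk) (redu d Gk) x = 0) := by
  constructor
  · intro h x
    have h1 := h (1, x)
    rw [pairCR_eq d Fk Gk hFs hGs] at h1
    rw [pairR_eq d Fk Gk hFs hGs]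
    simpa using h1
  · intro h p
    rw [pairCR_eq d Fk Gk hFs hGs]
    set z := p.1
    set x := p.2
    set a : Fin m → ℕ → ℂ := fun i k => fderiv ℝ (Fk k) x (Pi.single i 1) with ha
    set b : Fin m → ℕ → ℂ := fun i l => fderiv ℝ (Gk l) x (Pi.single i 1) with hb
    set pol : ℂ[X] := ∑ i, (∑ k ∈ range (d + 1), C (a i k) * X ^ k)
        * (∑ l ∈ range (d + 1), C (b i l) * X ^ l) with hpoldef
    have hev : ∀ t : ℝ, 0 < t → pol.eval (t : ℂ) = 0 := by
      intro t ht
      have h0 := h (t • x)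
      rw [pairR_eq d Fk Gk hFs hGs] at h0
      have key : pol.eval (t : ℂ) = (t : ℂ) ^ 2
          * ∑ i, (∑ k ∈ range (d + 1), fderiv ℝ (Fk k) (t • x) (Pi.single i 1))
              * (∑ l ∈ range (d + 1), fderiv ℝ (Gk l) (t • x) (Pi.single i 1)) := by
        rw [Finset.mul_sum]
        simp only [hpoldef, eval_finset_sum, eval_mul, eval_pow, eval_C, eval_X]
        refine Finset.sum_congr rfl fun i _ => ?_
        have e1 : (t : ℂ) * ∑ k ∈ range (d + 1), fderiv ℝ (Fk k) (t • x) (Pi.single i 1)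
            = ∑ k ∈ range (d + 1), a i k * (t : ℂ) ^ k := by
          rw [Finset.mul_sum]
          exact Finset.sum_congr rfl fun k _ =>
            (fderiv_homog k (Fk k) (hFs k) (hFh k) t ht x _).trans (mul_comm _ _)
        have e2 : (t : ℂ) * ∑ l ∈ range (d + 1), fderiv ℝ (Gk l) (t • x) (Pi.single i 1)
            = ∑ l ∈ range (d + 1), b i l * (t : ℂ) ^ l := by
          rw [Finset.mul_sum]
          exact Finset.sum_congr rfl fun l _ =>
            (fderiv_homog l (Gk l) (hGs l) (hGh l) t ht x _).trans (mul_comm _ _)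
        rw [← e1, ← e2]; ring
      rw [key, h0, mul_zero]
    have hpol : pol = 0 := by
      apply Polynomial.eq_zero_of_infinite_isRoot
      have hsub : (fun t : ℝ => (t : ℂ)) '' Set.Ioi 0 ⊆ { w | pol.IsRoot w } := by
        rintro w ⟨t, ht, rfl⟩
        exact hev t ht
      have hinf : ((fun t : ℝ => (t : ℂ)) '' Set.Ioi 0).Infinite :=
        (Set.Ioi_infinite 0).image (fun s _ r _ hsr => by exact_mod_cast hsr)
      exact hinf.mono hsub
    have hdegA : ∀ i, (∑ k ∈ range (d + 1), C (a i k) * X ^ k).natDegree ≤ d := fun i =>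
      Polynomial.natDegree_sum_le_of_forall_le _ _ fun k hk =>
        (Polynomial.natDegree_C_mul_X_pow_le _ _).trans (Nat.lt_succ_iff.mp (mem_range.mp hk))
    have hdegB : ∀ i, (∑ l ∈ range (d + 1), C (b i l) * X ^ l).natDegree ≤ d := fun i =>
      Polynomial.natDegree_sum_le_of_forall_le _ _ fun l hl =>
        (Polynomial.natDegree_C_mul_X_pow_le _ _).trans (Nat.lt_succ_iff.mp (mem_range.mp hl))
    have hqA : ∀ i, Polynomial.reflect d (∑ k ∈ range (d + 1), C (a i k) * X ^ k)
        = ∑ k ∈ range (d + 1), C (a i k) * X ^ (d - k) := by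
      intro i
      rw [reflect_sum]
      refine Finset.sum_congr rfl fun k hk => ?_
      rw [Polynomial.reflect_C_mul_X_pow, Polynomial.revAt_le (Nat.lt_succ_iff.mp (mem_range.mp hk))]
    have hqB : ∀ i, Polynomial.reflect d (∑ l ∈ range (d + 1), C (b i l) * X ^ l)
        = ∑ l ∈ range (d + 1), C (b i l) * X ^ (d - l) := by
      intro i
      rw [reflect_sum]
      refine Finset.sum_congr rfl fun l hl => ?_
      rw [Polynomial.reflect_C_mul_X_pow, Polynomial.revAt_le (Nat.lt_succ_iff.mp (mem_range.mp hl))]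
    have hrefl : (∑ i, (∑ k ∈ range (d + 1), C (a i k) * X ^ (d - k))
        * (∑ l ∈ range (d + 1), C (b i l) * X ^ (d - l))) = Polynomial.reflect (d + d) pol := by
      rw [hpoldef, reflect_sum]
      refine Finset.sum_congr rfl fun i _ => ?_
      rw [Polynomial.reflect_mul _ _ (hdegA i) (hdegB i), hqA i, hqB i]
    have hzero : (∑ i, (∑ k ∈ range (d + 1), C (a i k) * X ^ (d - k))
        * (∑ l ∈ range (d + 1), C (b i l) * X ^ (d - l))) = 0 := by
      rw [hrefl, hpol, Polynomial.reflect_zero]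
    have := congrArg (Polynomial.eval z) hzero
    simp only [eval_finset_sum, eval_mul, eval_pow, eval_C, eval_X, eval_zero] at this
    rw [← this]
    refine Finset.sum_congr rfl fun i _ => ?_
    congr 1 <;> exact Finset.sum_congr rfl fun k _ => mul_comm _ _
end

section
/- Let H₁, H₂ ⊆ ℂ^a be spanned by vectors ξ₁,…,ξ_n and η₁,…,η_n respectively, where ξ_iᵀξ_j = 0, η_iᵀη_j = 0, and ξ_iᵀη_j + ξ_jᵀη_i = 0 for all i, j. Assume additionally that the only isotropic vector x ∈ ℂ^a with xᵀξ_i = 0 = xᵀη_i for all i is x = 0. Then the map φ : H₁ → H₂ given by φ(Σλ_iξ_i) = Σλ_iη_i is a well-defined ℂ-linear isomorphism, and xᵀφ(y) = −φ(x)ᵀy for all x, y ∈ H₁. -/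
/-!
If `∑ cᵢ ξᵢ = 0`, then `x = ∑ cᵢ ηᵢ` is isotropic, orthogonal to every `ηⱼ`, and by the mixed
relation `ξᵢᵀηⱼ + ξⱼᵀηᵢ = 0` also orthogonal to every `ξⱼ`; hence `x = 0`, and symmetrically.
So the coefficient maps `c ↦ ∑ cᵢ ξᵢ` and `c ↦ ∑ cᵢ ηᵢ` have the same kernel, and `φ` is the
induced isomorphism between their ranges. The skew relation `xᵀφ(y) = -φ(x)ᵀy` is the bilinear
extension of the mixed relation.
-/

/-- The complex bilinear pairing on `ℂ^a`. -/
noncomputable def bil {a : ℕ} (v w : Fin a → ℂ) : ℂ := ∑ i, v i * w i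

open LinearMap Submodule

section RangeEquiv

variable {R N M₁ M₂ : Type*} [Ring R] [AddCommGroup N] [Module R N]
  [AddCommGroup M₁] [Module R M₁] [AddCommGroup M₂] [Module R M₂]

noncomputable def LinearMap.rangeEquivOfKerEq (f : N →ₗ[R] M₁) (g : N →ₗ[R] M₂)
    (h : ker f = ker g) : range f ≃ₗ[R] range g :=
  f.quotKerEquivRange.symm ≪≫ₗ Submodule.quotEquivOfEq _ _ h ≪≫ₗ g.quotKerEquivRange

theorem LinearMap.rangeEquivOfKerEq_apply {f : N →ₗ[R] M₁} {g : N →ₗ[R] M₂}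
    (h : ker f = ker g) {x : range f} {c : N} (hc : f c = x) :
    (rangeEquivOfKerEq f g h x : M₂) = g c := by
  obtain rfl : x = f.quotKerEquivRange (Submodule.Quotient.mk c) := Subtype.ext hc.symm
  simp [rangeEquivOfKerEq, quotEquivOfEq_mk, quotKerEquivRange_apply_mk]

end RangeEquiv

section SpanEquiv

variable {R M ι : Type*} [CommRing R] [AddCommGroup M] [Module R M] [Fintype ι]

noncomputable def Submodule.spanEquivOfKerEq (ξ η : ι → M)
    (h : ker (Fintype.linearCombination R ξ) = ker (Fintype.linearCombination R η)) :
    span R (Set.range ξ) ≃ₗ[R] span R (Set.range η) :=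
  LinearEquiv.ofEq _ _ (Fintype.range_linearCombination R ξ).symm ≪≫ₗ
    rangeEquivOfKerEq _ _ h ≪≫ₗ LinearEquiv.ofEq _ _ (Fintype.range_linearCombination R η)

variable {ξ η : ι → M}
  (h : ker (Fintype.linearCombination R ξ) = ker (Fintype.linearCombination R η))

theorem Submodule.spanEquivOfKerEq_apply {x : span R (Set.range ξ)} {c : ι → R}
    (hc : Fintype.linearCombination R ξ c = x) :
    (spanEquivOfKerEq ξ η h x : M) = Fintype.linearCombination R η c :=
  rangeEquivOfKerEq_apply h (x := ⟨x, by rw [Fintype.range_linearCombination]; exact x.2⟩) hc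

theorem Submodule.spanEquivOfKerEq_apply_self [DecidableEq ι] (i : ι) :
    (spanEquivOfKerEq ξ η h ⟨ξ i, subset_span ⟨i, rfl⟩⟩ : M) = η i := by
  rw [spanEquivOfKerEq_apply h (c := Pi.single i 1)] <;>
    simp [Fintype.linearCombination_apply_single]

end SpanEquiv

section BilinForm

variable {R M ι : Type*} [CommRing R] [AddCommGroup M] [Module R M] [Fintype ι]
  (B : LinearMap.BilinForm R M) {ξ η : ι → M}

local notation "lc" => Fintype.linearCombination R

theorem LinearMap.BilinForm.apply_linearCombination (c d : ι → R) :
    B (lc ξ c) (lc η d) = ∑ i, ∑ j, c i * d j * B (ξ i) (η j) := by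
  simp only [Fintype.linearCombination_apply, map_sum, map_smul, LinearMap.sum_apply,
    LinearMap.smul_apply, smul_eq_mul, Finset.mul_sum]
  rw [Finset.sum_comm]
  exact Finset.sum_congr rfl fun i _ => Finset.sum_congr rfl fun j _ => by ring

theorem LinearMap.BilinForm.apply_linearCombination_eq_zero
    (hξ : ∀ i j, B (ξ i) (ξ j) = 0) (c d : ι → R) : B (lc ξ c) (lc ξ d) = 0 := by
  simp [apply_linearCombination, hξ]

theorem LinearMap.BilinForm.apply_linearCombination_add_swap_eq_zero
    (hmix : ∀ i j, B (ξ i) (η j) + B (ξ j) (η i) = 0) (c d : ι → R) :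
    B (lc ξ c) (lc η d) + B (lc ξ d) (lc η c) = 0 := by
  rw [apply_linearCombination, apply_linearCombination]
  nth_rw 2 [Finset.sum_comm]
  rw [← Finset.sum_add_distrib]
  refine Finset.sum_eq_zero fun i _ => ?_
  rw [← Finset.sum_add_distrib]
  exact Finset.sum_eq_zero fun j _ => by linear_combination (c i * d j) * hmix i j

theorem LinearMap.BilinForm.ker_linearCombination_le (hB : B.IsSymm)
    (hη : ∀ i j, B (η i) (η j) = 0) (hmix : ∀ i j, B (ξ i) (η j) + B (ξ j) (η i) = 0)
    (hnd : ∀ x, B x x = 0 → (∀ i, B x (ξ i) = 0) → (∀ i, B x (η i) = 0) → x = 0) :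
    ker (lc ξ) ≤ ker (lc η) := by
  classical
  intro c hc
  rw [mem_ker] at hc ⊢
  refine hnd _ (B.apply_linearCombination_eq_zero hη c c) (fun j => ?_) (fun j => ?_)
  · have := B.apply_linearCombination_add_swap_eq_zero hmix c (Pi.single j 1)
    rw [hB.eq]
    simpa [hc, Fintype.linearCombination_apply_single] using this
  · simpa [Fintype.linearCombination_apply_single] using
      B.apply_linearCombination_eq_zero hη c (Pi.single j 1)

theorem LinearMap.BilinForm.ker_linearCombination_eq (hB : B.IsSymm)
    (hξ : ∀ i j, B (ξ i) (ξ j) = 0) (hη : ∀ i j, B (η i) (η j) = 0)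
    (hmix : ∀ i j, B (ξ i) (η j) + B (ξ j) (η i) = 0)
    (hnd : ∀ x, B x x = 0 → (∀ i, B x (ξ i) = 0) → (∀ i, B x (η i) = 0) → x = 0) :
    ker (lc ξ) = ker (lc η) :=
  le_antisymm (B.ker_linearCombination_le hB hη hmix hnd) <|
    B.ker_linearCombination_le hB hξ
      (fun i j => by rw [hB.eq (η i), hB.eq (η j)]; exact hmix j i)
      (fun x hx hη' hξ' => hnd x hx hξ' hη')

theorem LinearMap.BilinForm.apply_spanEquivOfKerEq (hB : B.IsSymm)
    (hmix : ∀ i j, B (ξ i) (η j) + B (ξ j) (η i) = 0) (h : ker (lc ξ) = ker (lc η))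
    (x y : span R (Set.range ξ)) :
    B x (spanEquivOfKerEq ξ η h y) = -B (spanEquivOfKerEq ξ η h x) y := by
  obtain ⟨c, hc⟩ : (x : M) ∈ range (lc ξ) := by rw [Fintype.range_linearCombination]; exact x.2
  obtain ⟨d, hd⟩ : (y : M) ∈ range (lc ξ) := by rw [Fintype.range_linearCombination]; exact y.2
  rw [spanEquivOfKerEq_apply h hc, spanEquivOfKerEq_apply h hd, ← hc, ← hd, hB.eq (lc η c)]
  linear_combination B.apply_linearCombination_add_swap_eq_zero hmix c d

end BilinForm

/-- Given `ξᵢ, ηᵢ` spanning `H₁, H₂ ⊆ ℂ^a` with `ξᵢᵀξⱼ = 0 = ηᵢᵀηⱼ` and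
`ξᵢᵀηⱼ + ξⱼᵀηᵢ = 0`, and such that the only isotropic vector annihilating all `ξᵢ, ηᵢ`
is zero, the map `φ(Σλᵢξᵢ) = Σλᵢηᵢ` is a well-defined ℂ-linear isomorphism `H₁ → H₂`
with `xᵀφ(y) = -φ(x)ᵀy`. -/
theorem stmt15 {a n : ℕ} (ξ η : Fin n → (Fin a → ℂ))
    (hξ : ∀ i j, bil (ξ i) (ξ j) = 0) (hη : ∀ i j, bil (η i) (η j) = 0)
    (hmix : ∀ i j, bil (ξ i) (η j) + bil (ξ j) (η i) = 0)
    (hnd : ∀ x : Fin a → ℂ, bil x x = 0 → (∀ i, bil x (ξ i) = 0) →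
      (∀ i, bil x (η i) = 0) → x = 0) :
    ∃ φ : (Submodule.span ℂ (Set.range ξ)) ≃ₗ[ℂ] (Submodule.span ℂ (Set.range η)),
      (∀ i, (φ ⟨ξ i, Submodule.subset_span ⟨i, rfl⟩⟩ : Fin a → ℂ) = η i) ∧
      ∀ x y : Submodule.span ℂ (Set.range ξ),
        bil (x : Fin a → ℂ) ((φ y : Fin a → ℂ)) = -bil ((φ x : Fin a → ℂ)) (y : Fin a → ℂ) := by
  let B : LinearMap.BilinForm ℂ (Fin a → ℂ) := dotProductBilin ℂ ℂ
  have hB : B.IsSymm := ⟨dotProduct_comm⟩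
  have hker := B.ker_linearCombination_eq hB hξ hη hmix hnd
  exact ⟨spanEquivOfKerEq ξ η hker, spanEquivOfKerEq_apply_self hker,
    B.apply_spanEquivOfKerEq hB hmix hker⟩
end

section
/- Let Y be a complex k×k matrix defined by Y_{ij} = e_iᵀφ(e_j), where e₁,…,e_k is a Hermitian-orthonormal basis of an isotropic subspace H₁ ⊆ ℂ^a and φ : H₁ → H₂ is a ℂ-linear isomorphism onto an isotropic subspace H₂ satisfying xᵀφ(y) = −φ(x)ᵀy for all x,y ∈ H₁; assume moreover that any isotropic vector annihilating both H₁ and H₂ (under the bilinear pairing) is zero. Then Y is antisymmetric and invertible; in particular k = dim_ℂ H₁ is even. -/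
/-!
`Y` is antisymmetric by the skew condition on `φ`. If `Y c = 0`, the vector
`x = φ(∑ cⱼ eⱼ)` lies in the isotropic `H₂` and annihilates every `eᵢ`, hence all of `H₁`;
non-degeneracy gives `x = 0`, and since `φ` is injective and the `eⱼ` are Hermitian-orthonormal,
`c = 0`. Finally `det Y = det Yᵀ = (-1)ᵏ det Y` with `det Y` a unit forces `k` to be even.
-/

open Matrix
theorem bil_comm {a : ℕ} (v w : Fin a → ℂ) : bil v w = bil w v :=
  dotProduct_comm v w

theorem bil_eq_zero_of_mem_span {a : ℕ} {ι : Type*} {x : Fin a → ℂ} {v : ι → Fin a → ℂ}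
    (hx : ∀ i, bil x (v i) = 0) {y : Fin a → ℂ} (hy : y ∈ Submodule.span ℂ (Set.range v)) :
    bil x y = 0 :=
  Submodule.span_le (p := LinearMap.ker (dotProductBilin ℂ ℂ x)) |>.mpr
    (Set.range_subset_iff.mpr hx) hy

theorem linearIndependent_of_star_dotProduct_eq_ite {R ι n : Type*} [CommRing R] [StarRing R]
    [Fintype ι] [DecidableEq ι] [Fintype n] {e : ι → n → R}
    (h : ∀ i j, ∑ l, starRingEnd R (e i l) * e j l = if i = j then 1 else 0) :
    LinearIndependent R e := by
  refine Fintype.linearIndependent_iff.mpr fun g hg i => ?_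
  have hi : ∀ j, star (e i) ⬝ᵥ e j = if i = j then 1 else 0 := h i
  simpa [dotProduct_sum, dotProduct_smul, hi] using congrArg (star (e i) ⬝ᵥ ·) hg

theorem Matrix.mulVec_of_dotProduct {R m n ι : Type*} [CommSemiring R] [Fintype n] [Fintype ι]
    (u : m → ι → R) (v : n → ι → R) (c : n → R) :
    (of fun i j => u i ⬝ᵥ v j) *ᵥ c = fun i => u i ⬝ᵥ ∑ j, c j • v j := by
  ext i
  simp only [mulVec, of_apply, dotProduct_sum, dotProduct_smul, smul_eq_mul]
  exact Finset.sum_congr rfl fun _ _ => mul_comm _ _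

theorem Matrix.even_card_of_transpose_eq_neg {R n : Type*} [CommRing R] [Fintype n]
    [DecidableEq n] (hR : (-1 : R) ≠ 1) {A : Matrix n n R} (hT : Aᵀ = -A) (hA : IsUnit A) :
    Even (Fintype.card n) := by
  have hdet : IsUnit A.det := (isUnit_iff_isUnit_det A).mp hA
  have : (-1) ^ Fintype.card n * A.det = 1 * A.det := by
    rw [← det_neg, ← hT, det_transpose, one_mul]
  exact (neg_one_pow_eq_one_iff_even hR).mp (hdet.mul_left_inj.mp this)

theorem stmt16_general {a k : ℕ} (H₁ H₂ : Submodule ℂ (Fin a → ℂ))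
    (h2 : ∀ x ∈ H₂, ∀ y ∈ H₂, bil x y = 0)
    (e : Fin k → (Fin a → ℂ)) (he : ∀ i, e i ∈ H₁)
    (hspan : Submodule.span ℂ (Set.range e) = H₁)
    (horth : ∀ i j, ∑ l, (starRingEnd ℂ) (e i l) * e j l = if i = j then 1 else 0)
    (φ : H₁ ≃ₗ[ℂ] H₂)
    (hanti : ∀ x y : H₁, bil (x : Fin a → ℂ) ((φ y : Fin a → ℂ))
      = -bil ((φ x : Fin a → ℂ)) (y : Fin a → ℂ))
    (hnd : ∀ x : Fin a → ℂ, bil x x = 0 → (∀ y ∈ H₁, bil x y = 0) →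
      (∀ y ∈ H₂, bil x y = 0) → x = 0)
    (Y : Matrix (Fin k) (Fin k) ℂ)
    (hY : ∀ i j, Y i j = bil (e i) ((φ ⟨e j, he j⟩ : Fin a → ℂ))) :
    Yᵀ = -Y ∧ IsUnit Y ∧ Even k := by
  set f : Fin k → Fin a → ℂ := fun j => φ ⟨e j, he j⟩
  have hT : Yᵀ = -Y := by
    ext i j
    rw [transpose_apply, neg_apply, hY, hY, hanti ⟨e j, he j⟩ ⟨e i, he i⟩, bil_comm]
  have hker : ∀ c, Y *ᵥ c = 0 → c = 0 := by
    intro c hc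
    set u : H₁ := ∑ j, c j • ⟨e j, he j⟩
    have hφu : (φ u : Fin a → ℂ) = ∑ j, c j • f j := by
      simp only [u, f, map_sum, map_smul, Submodule.coe_sum, Submodule.coe_smul]
    rw [show Y = of fun i j => e i ⬝ᵥ f j from Matrix.ext hY, mulVec_of_dotProduct] at hc
    have hYc : ∀ i, bil (φ u : Fin a → ℂ) (e i) = 0 := fun i => by
      rw [bil_comm, hφu]
      exact congrFun hc i
    have hφu0 : (φ u : Fin a → ℂ) = 0 := hnd _ (h2 _ (φ u).2 _ (φ u).2)
      (fun y hy => bil_eq_zero_of_mem_span hYc (hspan ▸ hy)) (h2 _ (φ u).2)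
    have hu : ∑ j, c j • e j = 0 := by
      have : u = 0 := φ.map_eq_zero_iff.mp (Subtype.ext hφu0)
      simpa [u] using congrArg Subtype.val this
    have hli := linearIndependent_of_star_dotProduct_eq_ite horth
    exact funext (Fintype.linearIndependent_iff.mp hli c hu)
  have hU : IsUnit Y := by
    refine (isUnit_iff_isUnit_det Y).mpr (isUnit_iff_ne_zero.mpr fun hdet => ?_)
    obtain ⟨c, hc0, hc⟩ := exists_mulVec_eq_zero_iff.mpr hdet
    exact hc0 (hker c hc)
  exact ⟨hT, hU, by simpa using even_card_of_transpose_eq_neg (by norm_num) hT hU⟩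

/-- Let `H₁, H₂ ⊆ ℂ^a` be isotropic, `e₁,…,e_k` a Hermitian-orthonormal basis of `H₁`,
`φ : H₁ ≃ H₂` ℂ-linear with `xᵀφ(y) = -φ(x)ᵀy`, and suppose the only isotropic vector
annihilating both `H₁` and `H₂` is zero. Then `Y = (eᵢᵀφ(eⱼ))ᵢⱼ` is antisymmetric and
invertible; in particular `k = dim_ℂ H₁` is even. -/
theorem stmt16 {a k : ℕ} (H₁ H₂ : Submodule ℂ (Fin a → ℂ))
    (h1 : ∀ x ∈ H₁, ∀ y ∈ H₁, bil x y = 0)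
    (h2 : ∀ x ∈ H₂, ∀ y ∈ H₂, bil x y = 0)
    (e : Fin k → (Fin a → ℂ)) (he : ∀ i, e i ∈ H₁)
    (hspan : Submodule.span ℂ (Set.range e) = H₁)
    (horth : ∀ i j, ∑ l, (starRingEnd ℂ) (e i l) * e j l = if i = j then 1 else 0)
    (φ : H₁ ≃ₗ[ℂ] H₂)
    (hanti : ∀ x y : H₁, bil (x : Fin a → ℂ) ((φ y : Fin a → ℂ))
      = -bil ((φ x : Fin a → ℂ)) (y : Fin a → ℂ))
    (hnd : ∀ x : Fin a → ℂ, bil x x = 0 → (∀ y ∈ H₁, bil x y = 0) →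
      (∀ y ∈ H₂, bil x y = 0) → x = 0)
    (Y : Matrix (Fin k) (Fin k) ℂ)
    (hY : ∀ i j, Y i j = bil (e i) ((φ ⟨e j, he j⟩ : Fin a → ℂ))) :
    Yᵀ = -Y ∧ IsUnit Y ∧ Even k :=
  stmt16_general H₁ H₂ h2 e he hspan horth φ hanti hnd Y hY
end
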